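/- arXiv:1110.1057 — 6 statements merged into one kernel-verified Lean document; each statement's English description precedes it below -/
import Mathlib

section
/- If ν is a Bessel measure for a Borel probability measure μ on ℝ^d (with Bessel bound B), then there exists a constant C > 0 such that ν(K) ≤ C · max{1, (diam K)^d} for every compact set K ⊂ ℝ^d; in particular, ν is σ-finite. -/
open MeasureTheory Filter Metric Complex Set
open scoped ENNReal NNReal Real Topology

noncomputable section

/-- Euclidean space `ℝ^d`. -/
abbrev Ed (d : ℕ) := EuclideanSpace ℝ (Fin d)

/-- The Fourier transform of the measure `f dμ`:
`(f dμ)^(t) = ∫ f(x) e^{-2πi t·x} dμ(x)`. -/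
def ftm {d : ℕ} (μ : Measure (Ed d)) (f : Ed d → ℂ) (t : Ed d) : ℂ :=
  ∫ x, f x * Complex.exp (-(2 * Real.pi * (inner ℝ t x : ℝ)) * Complex.I) ∂μ

/-- `ν` is a Bessel measure for `μ` with bound `B`:
`∫ |(f dμ)^(t)|² dν(t) ≤ B ‖f‖²_{L²(μ)}` for all `f ∈ L²(μ)`. -/
def IsBesselBound {d : ℕ} (μ ν : Measure (Ed d)) (B : ℝ) : Prop :=
  ∀ f : Ed d → ℂ, MemLp f 2 μ →
    ∫⁻ t, (‖ftm μ f t‖₊ : ℝ≥0∞) ^ 2 ∂ν ≤ ENNReal.ofReal B * ∫⁻ x, (‖f x‖₊ : ℝ≥0∞) ^ 2 ∂μ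

/-- `ν` is a frame measure for `μ` with bounds `A, B`:
`A ‖f‖²_{L²(μ)} ≤ ∫ |(f dμ)^(t)|² dν(t) ≤ B ‖f‖²_{L²(μ)}` for all `f ∈ L²(μ)`. -/
def IsFrameBounds {d : ℕ} (μ ν : Measure (Ed d)) (A B : ℝ) : Prop :=
  ∀ f : Ed d → ℂ, MemLp f 2 μ →
    ENNReal.ofReal A * ∫⁻ x, (‖f x‖₊ : ℝ≥0∞) ^ 2 ∂μ ≤ ∫⁻ t, (‖ftm μ f t‖₊ : ℝ≥0∞) ^ 2 ∂ν ∧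
    ∫⁻ t, (‖ftm μ f t‖₊ : ℝ≥0∞) ^ 2 ∂ν ≤ ENNReal.ofReal B * ∫⁻ x, (‖f x‖₊ : ℝ≥0∞) ^ 2 ∂μ

/-- The cube `x + R·Q` where `Q = [0,1)^d`. -/
def cube {d : ℕ} (x : Ed d) (R : ℝ) : Set (Ed d) := {y | ∀ i, y i ∈ Set.Ico (x i) (x i + R)}

/-- The `α`-upper Beurling density `D_α(ν) = limsup_{R→∞} sup_x ν(x+RQ)/R^α`. -/
def beurlingDensity {d : ℕ} (ν : Measure (Ed d)) (α : ℝ) : ℝ≥0∞ :=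
  limsup (fun R : ℝ => ⨆ x : Ed d, ν (cube x R) / ENNReal.ofReal (R ^ α)) atTop

/-- The upper Beurling dimension `dim ν = sup {α ≥ 0 : D_α(ν) = ∞}`. -/
def beurlingDim {d : ℕ} (ν : Measure (Ed d)) : ℝ≥0∞ :=
  ⨆ (α : ℝ) (_ : 0 ≤ α) (_ : beurlingDensity ν α = ∞), ENNReal.ofReal α

/-- The `d`-lower Beurling density `D⁻(ν) = liminf_{R→∞} inf_x ν(x+RQ)/R^d`. -/
def lowerBeurlingDensity {d : ℕ} (ν : Measure (Ed d)) : ℝ≥0∞ :=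
  liminf (fun R : ℝ => ⨅ x : Ed d, ν (cube x R) / ENNReal.ofReal (R ^ (d : ℝ))) atTop

/-! Testing the Bessel inequality against the character `x ↦ exp (2πi ⟪s, x⟫)`, whose Fourier
transform is the characteristic function of `μ` recentred at `s`, gives `ν (closedBall s r) ≤ 4B`
for every `s`, where `r` is chosen so that the characteristic function has modulus `≥ 1/2` on the
ball of radius `r` about the origin (it is continuous and equals `1` at `0`). A compact `K` lies in
a ball of radius `diam K`; a maximal `r`-separated subset of `K` covers it by `r`-balls, and
comparing the Lebesgue volumes of the disjoint `r/2`-balls around its points bounds its size by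
`(1 + 2 diam K / r) ^ d`. -/

theorem one_add_mul_pow_le_mul_max {a D : ℝ} (ha : 0 ≤ a) (hD : 0 ≤ D) (n : ℕ) :
    (1 + a * D) ^ n ≤ (1 + a) ^ n * max 1 (D ^ n) := by
  rcases le_total D 1 with hD1 | hD1
  · rw [max_eq_left (pow_le_one₀ hD hD1), mul_one]
    gcongr
    nlinarith
  · rw [max_eq_right (one_le_pow₀ hD1), ← mul_pow]
    gcongr
    nlinarith

section
open Module Finset

variable {E : Type*} [NormedAddCommGroup E] [NormedSpace ℝ E] [FiniteDimensional ℝ E]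
  {ε : ℝ≥0} {x : E} {R : ℝ}

theorem Metric.IsSeparated.card_le_of_subset_closedBall (hε : 0 < ε) {s : Finset E}
    (hs : IsSeparated ε (s : Set E)) (hR : 0 ≤ R) (hsx : (s : Set E) ⊆ closedBall x R) :
    (#s : ℝ) ≤ (1 + 2 * R / ε) ^ finrank ℝ E := by
  borelize E
  set μ : Measure E := Measure.addHaar
  set ρ : ℝ := ε / 2 with hρ_def
  have hρ : 0 < ρ := by positivity
  have hdisj : (s : Set E).PairwiseDisjoint fun c => ball c ρ := by
    intro a ha b hb hab
    refine disjoint_left.2 fun y hya hyb => ?_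
    have hab_lt : dist a b < ε := by
      have hya' : dist y a < ρ := hya
      have hyb' : dist y b < ρ := hyb
      linarith [dist_triangle_left a b y]
    refine (hs ha hb hab).not_gt ?_
    rw [← ENNReal.ofReal_coe_nnreal]
    exact edist_lt_ofReal.2 hab_lt
  have hsub : (⋃ c ∈ s, ball c ρ) ⊆ ball x (R + ρ) := by
    refine iUnion₂_subset fun c hc => ball_subset_ball' ?_
    linarith [mem_closedBall.1 (hsx hc)]
  have hvol : (#s : ℝ≥0∞) * (ENNReal.ofReal (ρ ^ finrank ℝ E) * μ (ball 0 1)) ≤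
      ENNReal.ofReal ((R + ρ) ^ finrank ℝ E) * μ (ball 0 1) := by
    calc (#s : ℝ≥0∞) * (ENNReal.ofReal (ρ ^ finrank ℝ E) * μ (ball 0 1))
        = ∑ c ∈ s, μ (ball c ρ) := by
          simp [Measure.addHaar_ball_of_pos μ _ hρ]
      _ = μ (⋃ c ∈ s, ball c ρ) :=
          (measure_biUnion_finset hdisj fun _ _ => measurableSet_ball).symm
      _ ≤ μ (ball x (R + ρ)) := measure_mono hsub
      _ = _ := Measure.addHaar_ball_of_pos μ _ (by positivity)
  rw [← mul_assoc, ENNReal.mul_le_mul_iff_left (measure_ball_pos μ 0 one_pos).ne'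
    measure_ball_lt_top.ne, ← ENNReal.ofReal_natCast, ← ENNReal.ofReal_mul (by positivity),
    ENNReal.ofReal_le_ofReal_iff (by positivity)] at hvol
  have : 1 + 2 * R / ε = (R + ρ) / ρ := by field_simp; ring
  rw [this, div_pow, le_div_iff₀ (by positivity)]
  exact hvol

theorem Metric.packingNumber_le_of_subset_closedBall (hε : 0 < ε) (hR : 0 ≤ R) {A : Set E}
    (hA : A ⊆ closedBall x R) :
    packingNumber ε A ≤ ⌊(1 + 2 * R / ε) ^ finrank ℝ E⌋₊ := by
  refine iSup₂_le fun C hCA => iSup_le fun hC => ?_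
  by_contra! hlt
  obtain ⟨t, htC, htcard⟩ := Set.exists_subset_encard_eq (Order.add_one_le_of_lt hlt)
  obtain ⟨u, rfl⟩ := (Set.finite_of_encard_eq_coe htcard).exists_finset_coe
  rw [Set.encard_coe_eq_coe_finsetCard] at htcard
  have hu := (hC.subset htC).card_le_of_subset_closedBall hε hR (htC.trans (hCA.trans hA))
  rw [show u.card = _ from mod_cast htcard] at hu
  exact (Nat.lt_floor_add_one _).not_ge (mod_cast hu)

theorem measure_le_of_forall_measure_closedBall_le [MeasurableSpace E] (ν : Measure E)
    (hε : 0 < ε) {c : ℝ≥0∞} (hν : ∀ y, ν (closedBall y ε) ≤ c) (hR : 0 ≤ R) {K : Set E}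
    (hK : K ⊆ closedBall x R) :
    ν K ≤ ⌊(1 + 2 * R / ε) ^ finrank ℝ E⌋₊ * c := by
  have hpack := packingNumber_le_of_subset_closedBall hε hR hK
  have htop : packingNumber ε K ≠ ⊤ := ne_top_of_le_ne_top (by simp) hpack
  set C := maximalSeparatedSet ε K
  have hCcard : C.encard ≤ _ := (encard_maximalSeparatedSet htop).trans_le hpack
  obtain ⟨hCfin, hCncard⟩ := Set.encard_le_coe_iff_finite_ncard_le.1 hCcard
  have hcover : K ⊆ ⋃ y ∈ hCfin.toFinset, closedBall y ε := by
    intro z hz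
    obtain ⟨y, hyC, hzy⟩ := isCover_maximalSeparatedSet htop hz
    exact mem_iUnion₂.2
      ⟨y, hCfin.mem_toFinset.2 hyC, mem_closedBall.2 (by simpa [edist_dist] using hzy)⟩
  calc ν K ≤ ∑ y ∈ hCfin.toFinset, ν (closedBall y ε) :=
        (measure_mono hcover).trans (measure_biUnion_finset_le _ _)
    _ ≤ ∑ y ∈ hCfin.toFinset, c := Finset.sum_le_sum fun y _ => hν y
    _ ≤ _ := by
      rw [Finset.sum_const, nsmul_eq_mul, ← Set.ncard_eq_toFinset_card C hCfin]
      gcongr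

theorem measure_le_mul_max_one_diam_pow [MeasurableSpace E] (ν : Measure E) (hε : 0 < ε)
    {c : ℝ} (hc : 0 ≤ c) (hν : ∀ y, ν (closedBall y ε) ≤ ENNReal.ofReal c) {K : Set E}
    (hK : Bornology.IsBounded K) :
    ν K ≤ ENNReal.ofReal ((1 + 2 / ε) ^ finrank ℝ E * c * max 1 (diam K ^ finrank ℝ E)) := by
  rcases K.eq_empty_or_nonempty with rfl | ⟨x, hx⟩
  · simp
  have hcover := measure_le_of_forall_measure_closedBall_le ν hε hν diam_nonneg
    fun y hy => mem_closedBall.2 (dist_le_diam_of_mem hK hy hx)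
  rw [← ENNReal.ofReal_natCast, ← ENNReal.ofReal_mul (Nat.cast_nonneg _)] at hcover
  refine hcover.trans (ENNReal.ofReal_le_ofReal ?_)
  calc (⌊(1 + 2 * diam K / ε) ^ finrank ℝ E⌋₊ : ℝ) * c
      ≤ (1 + 2 * diam K / ε) ^ finrank ℝ E * c := by
        gcongr
        exact Nat.floor_le (by positivity)
    _ ≤ (1 + 2 / ε) ^ finrank ℝ E * max 1 (diam K ^ finrank ℝ E) * c := by
        rw [mul_div_right_comm]
        gcongr
        exact one_add_mul_pow_le_mul_max (by positivity) diam_nonneg _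
    _ = _ := by ring

end

theorem ftm_exp_inner_eq_charFun {d : ℕ} (μ : Measure (Ed d)) (s t : Ed d) :
    ftm μ (fun x => exp (↑(2 * π * inner ℝ s x) * I)) t = charFun μ (-(2 * π) • (t - s)) := by
  simp only [ftm, charFun_apply, ← exp_add, inner_smul_right, inner_sub_right, real_inner_comm]
  congr 1 with x
  push_cast
  ring_nf

theorem IsBesselBound.exists_measure_closedBall_le {d : ℕ} {μ ν : Measure (Ed d)}
    [IsProbabilityMeasure μ] {B : ℝ} (hν : IsBesselBound μ ν B) :
    ∃ r : ℝ≥0, 0 < r ∧ ∀ s : Ed d, ν (closedBall s r) ≤ ENNReal.ofReal (4 * B) := by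
  have hlim : Tendsto (fun t : Ed d => ‖charFun μ (-(2 * π) • t)‖) (𝓝 0) (𝓝 1) := by
    simpa using (((continuous_charFun (μ := μ)).comp
      (continuous_const_smul (-(2 * π)))).tendsto (0 : Ed d)).norm
  obtain ⟨r, hr, hhalf⟩ := Metric.nhds_basis_closedBall.eventually_iff.1
    (hlim.eventually (lt_mem_nhds one_half_lt_one))
  lift r to ℝ≥0 using hr.le
  refine ⟨r, mod_cast hr, fun s => ?_⟩
  set e : Ed d → ℂ := fun x => exp (↑(2 * π * inner ℝ s x) * I)
  have he : ∀ x, ‖e x‖ = 1 := fun x => norm_exp_ofReal_mul_I _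
  have hupper := hν e (.of_bound (by fun_prop : Continuous e).aestronglyMeasurable 1
    (ae_of_all _ fun x => (he x).le))
  have he' : ∀ x, ‖e x‖₊ = 1 := fun x => NNReal.eq (he x)
  simp only [he', ENNReal.coe_one, one_pow, lintegral_const, measure_univ, mul_one] at hupper
  have hlower :
      ENNReal.ofReal (1 / 4) * ν (closedBall s r) ≤ ∫⁻ t, (‖ftm μ e t‖₊ : ℝ≥0∞) ^ 2 ∂ν := by
    rw [← lintegral_indicator_const measurableSet_closedBall]
    refine lintegral_mono fun t => indicator_apply_le' (fun ht => ?_) fun _ => zero_le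
    have hnear : 1 / 2 < ‖ftm μ e t‖ := by
      rw [show ftm μ e t = _ from ftm_exp_inner_eq_charFun μ s t]
      exact hhalf (mem_closedBall_zero_iff.2 (by simpa [dist_eq_norm] using ht))
    calc ENNReal.ofReal (1 / 4) ≤ ENNReal.ofReal (‖ftm μ e t‖ ^ 2) :=
          ENNReal.ofReal_le_ofReal (by nlinarith)
      _ = (‖ftm μ e t‖₊ : ℝ≥0∞) ^ 2 := by
          rw [ENNReal.ofReal_pow (norm_nonneg _), ← coe_nnnorm, ENNReal.ofReal_coe_nnreal]
  calc ν (closedBall s r)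
        = ENNReal.ofReal 4 * (ENNReal.ofReal (1 / 4) * ν (closedBall s r)) := by
        rw [← mul_assoc, ← ENNReal.ofReal_mul (by norm_num)]; norm_num
    _ ≤ ENNReal.ofReal 4 * ENNReal.ofReal B := by gcongr; exact hlower.trans hupper
    _ = ENNReal.ofReal (4 * B) := (ENNReal.ofReal_mul (by norm_num)).symm

/-- If `ν` is a Bessel measure for a Borel probability measure `μ` on `ℝ^d`, then there is a
constant `C > 0` with `ν(K) ≤ C · max{1, (diam K)^d}` for every compact `K`; in particular `ν`
is σ-finite. -/
theorem stmt0 {d : ℕ} (μ ν : Measure (Ed d)) [IsProbabilityMeasure μ]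
    (B : ℝ) (hB : 0 < B) (hν : IsBesselBound μ ν B) :
    (∃ C > (0 : ℝ), ∀ K : Set (Ed d), IsCompact K →
      ν K ≤ ENNReal.ofReal (C * max 1 (Metric.diam K ^ d))) ∧ SigmaFinite ν := by
  obtain ⟨r, hr, hball⟩ := hν.exists_measure_closedBall_le
  have hbound (K : Set (Ed d)) (hK : IsCompact K) :
      ν K ≤ ENNReal.ofReal ((1 + 2 / r) ^ d * (4 * B) * max 1 (diam K ^ d)) := by
    simpa only [finrank_euclideanSpace_fin] using
      measure_le_mul_max_one_diam_pow ν hr (by positivity) hball hK.isBounded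
  have : IsFiniteMeasureOnCompacts ν :=
    ⟨fun K hK => (hbound K hK).trans_lt ENNReal.ofReal_lt_top⟩
  exact ⟨⟨_, by positivity, hbound⟩, inferInstance⟩
end
end

section
/- Fix constants A, B > 0 and a Borel probability measure μ on ℝ^d. The set of Bessel measures for μ with bound B and the set of frame measures for μ with bounds A, B are each convex (if ν₁, ν₂ belong to the set and 0 ≤ t ≤ 1, then tν₁ + (1−t)ν₂ belongs to it) and closed under convolution with Borel probability measures (if ν belongs to the set and ρ is any Borel probability measure on ℝ^d, then ν∗ρ belongs to it). -/
/-! Both properties are bounds on the quadratic form `Q_ν(f) = ∫ |(f dμ)^|² dν`, which is linear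
in `ν`, so convexity is immediate. For convolution, Tonelli gives `Q_{ν∗ρ}(f) = ∫ Q_ν(f_y) dρ(y)`,
where the modulation `f_y(x) = e^{-2πi x·y} f(x)` translates `(f dμ)^` by `y` and has the same
`L²(μ)` norm as `f`; the bounds for `ν` therefore average to the same bounds for `ν ∗ ρ`.
Tonelli needs `ν` to be σ-finite: since `μ̂(0) = μ(ℝ^d) ≠ 0`, testing the Bessel inequality on a
modulated constant shows that `ν` is finite on a neighbourhood of every point. -/

open MeasureTheory Filter Metric Complex Set
open scoped ENNReal NNReal Real Topology

noncomputable section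

open scoped RealInnerProductSpace FourierTransform

variable {d : ℕ}

lemma ftm_eq_fourierIntegral (μ : Measure (Ed d)) (f : Ed d → ℂ) :
    ftm μ f = VectorFourier.fourierIntegral 𝐞 μ (innerₗ (Ed d)) f := by
  ext t
  simp only [ftm, VectorFourier.fourierIntegral, Circle.smul_def, Real.fourierChar_apply,
    innerₗ_apply_apply, real_inner_comm t]
  congr 1
  ext x
  rw [mul_comm]
  push_cast
  ring_nf

lemma continuous_ftm {μ : Measure (Ed d)} {f : Ed d → ℂ} (hf : Integrable f μ) :
    Continuous (ftm μ f) := by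
  rw [ftm_eq_fourierIntegral]
  exact VectorFourier.fourierIntegral_continuous Real.continuous_fourierChar
    continuous_inner hf

def modulate (f : Ed d → ℂ) (y : Ed d) : Ed d → ℂ := fun x => 𝐞 (-⟪x, y⟫) • f x

lemma ftm_modulate (μ : Measure (Ed d)) (f : Ed d → ℂ) (y t : Ed d) :
    ftm μ (modulate f y) t = ftm μ f (t + y) := by
  simp only [ftm_eq_fourierIntegral, VectorFourier.fourierIntegral, modulate, smul_smul,
    innerₗ_apply_apply, inner_add_right, neg_add, AddChar.map_add_eq_mul]

lemma norm_modulate (f : Ed d → ℂ) (y x : Ed d) : ‖modulate f y x‖ = ‖f x‖ :=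
  Circle.norm_smul _ _

lemma MeasureTheory.MemLp.modulate {μ : Measure (Ed d)} {f : Ed d → ℂ} {p : ℝ≥0∞}
    (hf : MemLp f p μ) (y : Ed d) : MemLp (modulate f y) p μ := by
  have hchar : Continuous fun x : Ed d => 𝐞 (-⟪x, y⟫) := by fun_prop
  exact hf.of_le (hchar.aestronglyMeasurable.smul hf.1)
    (.of_forall fun x => (norm_modulate f y x).le)

lemma lintegral_nnnorm_modulate_sq (μ : Measure (Ed d)) (f : Ed d → ℂ) (y : Ed d) :
    ∫⁻ x, (‖modulate f y x‖₊ : ℝ≥0∞) ^ 2 ∂μ = ∫⁻ x, (‖f x‖₊ : ℝ≥0∞) ^ 2 ∂μ := by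
  simp only [← enorm_eq_nnnorm, ← ofReal_norm, norm_modulate]

lemma lintegral_ftm_conv {μ ν ρ : Measure (Ed d)} [SFinite ν] [SFinite ρ] {f : Ed d → ℂ}
    (hf : Integrable f μ) :
    ∫⁻ t, (‖ftm μ f t‖₊ : ℝ≥0∞) ^ 2 ∂(ν ∗ ρ)
      = ∫⁻ y, ∫⁻ t, (‖ftm μ (modulate f y) t‖₊ : ℝ≥0∞) ^ 2 ∂ν ∂ρ := by
  have hmeas : Measurable fun t => (‖ftm μ f t‖₊ : ℝ≥0∞) ^ 2 :=
    (continuous_ftm hf).measurable.nnnorm.coe_nnreal_ennreal.pow_const 2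
  simp only [ftm_modulate]
  rw [Measure.lintegral_conv hmeas]
  exact lintegral_lintegral_swap (hmeas.comp measurable_add).aemeasurable

section

variable {μ ν : Measure (Ed d)} {A B : ℝ}

theorem IsFrameBounds.isBesselBound (h : IsFrameBounds μ ν A B) : IsBesselBound μ ν B :=
  fun f hf => (h f hf).2

theorem IsBesselBound.isLocallyFiniteMeasure [IsFiniteMeasure μ] [NeZero μ]
    (h : IsBesselBound μ ν B) : IsLocallyFiniteMeasure ν := by
  refine ⟨fun u => ?_⟩
  set g := modulate (fun _ => (1 : ℂ)) (-u)
  set G : Ed d → ℝ≥0∞ := fun t => (‖ftm μ g t‖₊ : ℝ≥0∞) ^ 2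
  have hg : MemLp g 2 μ := (memLp_const 1).modulate (-u)
  have hG : Continuous G := (ENNReal.continuous_pow 2).comp
    (ENNReal.continuous_coe.comp (continuous_ftm (hg.integrable one_le_two)).nnnorm)
  have hGu : G u = μ univ ^ 2 := by
    simp only [G, g, ftm_modulate, add_neg_cancel]
    simp [ftm, ← enorm_eq_nnnorm, Real.enorm_eq_ofReal measureReal_nonneg]
  have hGu0 : G u ≠ 0 := by simp [hGu, NeZero.ne μ]
  have hGu_top : G u ≠ ⊤ := by simp [hGu]
  set c := G u / 2
  have hc : c ≠ 0 := (ENNReal.half_pos hGu0).ne'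
  refine ⟨{t | c < G t}, (isOpen_lt continuous_const hG).mem_nhds
    (ENNReal.half_lt_self hGu0 hGu_top), ?_⟩
  have hmarkov : c * ν {t | c < G t} ≤ ENNReal.ofReal B * μ univ := calc
    c * ν {t | c < G t} ≤ c * ν {t | c ≤ G t} := by gcongr; exact le_of_lt
    _ ≤ ∫⁻ t, G t ∂ν := mul_meas_ge_le_lintegral hG.measurable c
    _ ≤ ENNReal.ofReal B * ∫⁻ x, (‖g x‖₊ : ℝ≥0∞) ^ 2 ∂μ := h g hg
    _ = ENNReal.ofReal B * μ univ := by simp [g, lintegral_nnnorm_modulate_sq]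
  exact ENNReal.lt_top_of_mul_ne_top_right (ne_top_of_le_ne_top (by finiteness) hmarkov) hc

theorem IsBesselBound.conv [IsFiniteMeasure μ] [NeZero μ] {ρ : Measure (Ed d)}
    [IsProbabilityMeasure ρ] (h : IsBesselBound μ ν B) : IsBesselBound μ (ν ∗ ρ) B := by
  have := h.isLocallyFiniteMeasure
  intro f hf
  rw [lintegral_ftm_conv (hf.integrable one_le_two)]
  calc _ ≤ ∫⁻ _, ENNReal.ofReal B * ∫⁻ x, (‖f x‖₊ : ℝ≥0∞) ^ 2 ∂μ ∂ρ :=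
        lintegral_mono fun y => by
          simpa only [lintegral_nnnorm_modulate_sq] using h _ (hf.modulate y)
    _ = _ := by rw [lintegral_const, measure_univ, mul_one]

theorem IsFrameBounds.conv [IsFiniteMeasure μ] [NeZero μ] {ρ : Measure (Ed d)}
    [IsProbabilityMeasure ρ] (h : IsFrameBounds μ ν A B) : IsFrameBounds μ (ν ∗ ρ) A B := by
  have := h.isBesselBound.isLocallyFiniteMeasure
  refine fun f hf => ⟨?_, h.isBesselBound.conv f hf⟩
  rw [lintegral_ftm_conv (hf.integrable one_le_two)]
  calc _ = ∫⁻ _, ENNReal.ofReal A * ∫⁻ x, (‖f x‖₊ : ℝ≥0∞) ^ 2 ∂μ ∂ρ := by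
        rw [lintegral_const, measure_univ, mul_one]
    _ ≤ _ := lintegral_mono fun y => by
          simpa only [lintegral_nnnorm_modulate_sq] using (h _ (hf.modulate y)).1

variable {ν₁ ν₂ : Measure (Ed d)} {a b : ℝ≥0∞}

theorem IsBesselBound.add_smul (h₁ : IsBesselBound μ ν₁ B) (h₂ : IsBesselBound μ ν₂ B)
    (hab : a + b = 1) : IsBesselBound μ (a • ν₁ + b • ν₂) B := by
  intro f hf
  rw [lintegral_add_measure, lintegral_smul_measure, lintegral_smul_measure, smul_eq_mul,
    smul_eq_mul]
  calc _ ≤ a * (ENNReal.ofReal B * ∫⁻ x, (‖f x‖₊ : ℝ≥0∞) ^ 2 ∂μ)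
        + b * (ENNReal.ofReal B * ∫⁻ x, (‖f x‖₊ : ℝ≥0∞) ^ 2 ∂μ) := by
        gcongr; exacts [h₁ f hf, h₂ f hf]
    _ = _ := by rw [← add_mul, hab, one_mul]

theorem IsFrameBounds.add_smul (h₁ : IsFrameBounds μ ν₁ A B) (h₂ : IsFrameBounds μ ν₂ A B)
    (hab : a + b = 1) : IsFrameBounds μ (a • ν₁ + b • ν₂) A B := by
  refine fun f hf => ⟨?_, h₁.isBesselBound.add_smul h₂.isBesselBound hab f hf⟩
  rw [lintegral_add_measure, lintegral_smul_measure, lintegral_smul_measure, smul_eq_mul,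
    smul_eq_mul]
  calc _ = a * (ENNReal.ofReal A * ∫⁻ x, (‖f x‖₊ : ℝ≥0∞) ^ 2 ∂μ)
        + b * (ENNReal.ofReal A * ∫⁻ x, (‖f x‖₊ : ℝ≥0∞) ^ 2 ∂μ) := by
        rw [← add_mul, hab, one_mul]
    _ ≤ _ := by gcongr; exacts [(h₁ f hf).1, (h₂ f hf).1]

end

lemma ENNReal.ofReal_add_ofReal_one_sub {t : ℝ} (ht₀ : 0 ≤ t) (ht₁ : t ≤ 1) :
    ENNReal.ofReal t + ENNReal.ofReal (1 - t) = 1 := by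
  rw [← ENNReal.ofReal_add ht₀ (sub_nonneg.mpr ht₁), add_sub_cancel, ENNReal.ofReal_one]

theorem stmt2_general {d : ℕ} (μ : Measure (Ed d)) [IsProbabilityMeasure μ] (A B : ℝ) :
    (∀ ν₁ ν₂ : Measure (Ed d), IsBesselBound μ ν₁ B → IsBesselBound μ ν₂ B →
      ∀ t : ℝ, 0 ≤ t → t ≤ 1 →
        IsBesselBound μ (ENNReal.ofReal t • ν₁ + ENNReal.ofReal (1 - t) • ν₂) B) ∧
    (∀ ν₁ ν₂ : Measure (Ed d), IsFrameBounds μ ν₁ A B → IsFrameBounds μ ν₂ A B →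
      ∀ t : ℝ, 0 ≤ t → t ≤ 1 →
        IsFrameBounds μ (ENNReal.ofReal t • ν₁ + ENNReal.ofReal (1 - t) • ν₂) A B) ∧
    (∀ ν ρ : Measure (Ed d), IsBesselBound μ ν B → IsProbabilityMeasure ρ →
      IsBesselBound μ (ν ∗ ρ) B) ∧
    (∀ ν ρ : Measure (Ed d), IsFrameBounds μ ν A B → IsProbabilityMeasure ρ →
      IsFrameBounds μ (ν ∗ ρ) A B) :=
  ⟨fun _ _ h₁ h₂ _ ht₀ ht₁ => h₁.add_smul h₂ (ENNReal.ofReal_add_ofReal_one_sub ht₀ ht₁),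
    fun _ _ h₁ h₂ _ ht₀ ht₁ => h₁.add_smul h₂ (ENNReal.ofReal_add_ofReal_one_sub ht₀ ht₁),
    fun _ _ h _ => h.conv, fun _ _ h _ => h.conv⟩

/-- For fixed `A, B > 0` and a Borel probability measure `μ` on `ℝ^d`, the set of Bessel
measures with bound `B` and the set of frame measures with bounds `A, B` are convex and
closed under convolution with Borel probability measures. -/
theorem stmt2 {d : ℕ} (μ : Measure (Ed d)) [IsProbabilityMeasure μ] (A B : ℝ)
    (hA : 0 < A) (hB : 0 < B) :
    (∀ ν₁ ν₂ : Measure (Ed d), IsBesselBound μ ν₁ B → IsBesselBound μ ν₂ B →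
      ∀ t : ℝ, 0 ≤ t → t ≤ 1 →
        IsBesselBound μ (ENNReal.ofReal t • ν₁ + ENNReal.ofReal (1 - t) • ν₂) B) ∧
    (∀ ν₁ ν₂ : Measure (Ed d), IsFrameBounds μ ν₁ A B → IsFrameBounds μ ν₂ A B →
      ∀ t : ℝ, 0 ≤ t → t ≤ 1 →
        IsFrameBounds μ (ENNReal.ofReal t • ν₁ + ENNReal.ofReal (1 - t) • ν₂) A B) ∧
    (∀ ν ρ : Measure (Ed d), IsBesselBound μ ν B → IsProbabilityMeasure ρ →
      IsBesselBound μ (ν ∗ ρ) B) ∧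
    (∀ ν ρ : Measure (Ed d), IsFrameBounds μ ν A B → IsProbabilityMeasure ρ →
      IsFrameBounds μ (ν ∗ ρ) A B) :=
  stmt2_general μ A B
end
end

section
/- Let μ and μ' be Borel probability measures on ℝ^d and let 1 ≤ p ≤ ∞. For f ∈ L^p(μ), let Pf denote the Radon–Nikodym derivative of (f dμ)∗μ' with respect to μ∗μ'. Then Pf ∈ L^p(μ∗μ') and ‖Pf‖_{L^p(μ∗μ')} ≤ ‖f‖_{L^p(μ)}. -/
open MeasureTheory Filter Metric Complex Set
open scoped ENNReal NNReal Real Topology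

noncomputable section

/-!
Pulling back along the addition map `T (x, y) = x + y`, the defining identity of `Pf` says that
`Pf ∘ T` has the same integral as `(x, y) ↦ f x` over every set of the σ-algebra generated by
`T`, so `Pf ∘ T` is the conditional expectation of `(x, y) ↦ f x` given `T` under `μ ⊗ μ'`.
Conditional expectation contracts `L^p` norms, `T` pushes `μ ⊗ μ'` forward to `μ ∗ μ'`, and the
first projection pushes it forward to `μ`.
-/

section

variable {α β E : Type*} [NormedAddCommGroup E] [NormedSpace ℝ E] [CompleteSpace E]

-- A priori the integrals in `hg_eq` may be junk values `0`; but the truncations of `g` to the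
-- `m`-measurable sets `{‖g‖ ≤ n}` are integrable, and these sets exhaust `α`.
theorem ae_eq_condExp_of_forall_setIntegral_eq_of_isFiniteMeasure
    {m m₀ : MeasurableSpace α} {μ : Measure[m₀] α} [IsFiniteMeasure μ] (hm : m ≤ m₀)
    {f g : α → E} (hf : Integrable f μ) (hgm : AEStronglyMeasurable[m] g μ)
    (hg_eq : ∀ s, MeasurableSet[m] s → ∫ x in s, g x ∂μ = ∫ x in s, f x ∂μ) :
    g =ᵐ[μ] μ[f | m] := by
  obtain ⟨g', hg'm, hgg'⟩ := hgm
  refine hgg'.trans ?_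
  have hg'_eq (s : Set α) (hs : MeasurableSet[m] s) : ∫ x in s, g' x ∂μ = ∫ x in s, f x ∂μ :=
    (integral_congr_ae (ae_restrict_of_ae hgg'.symm)).trans (hg_eq s hs)
  set A : ℕ → Set α := fun n => {x | ‖g' x‖ ≤ n}
  have hA (n : ℕ) : MeasurableSet[m] (A n) :=
    measurableSet_le hg'm.norm.measurable measurable_const
  have h_trunc (n : ℕ) : (A n).indicator g' =ᵐ[μ] μ[(A n).indicator f | m] := by
    have hg'_int : Integrable ((A n).indicator g') μ := by
      refine .of_bound ((hg'm.indicator (hA n)).mono hm).aestronglyMeasurable n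
        (.of_forall fun x => ?_)
      rw [norm_indicator_eq_indicator_norm]
      exact Set.indicator_apply_le' id fun _ => n.cast_nonneg
    refine ae_eq_condExp_of_forall_setIntegral_eq hm (hf.indicator (hm _ (hA n)))
      (fun s _ _ => hg'_int.integrableOn) (fun s hs _ => ?_)
      (hg'm.indicator (hA n)).aestronglyMeasurable
    rw [setIntegral_indicator (hm _ (hA n)), setIntegral_indicator (hm _ (hA n)),
      hg'_eq _ (hs.inter (hA n))]
  filter_upwards [ae_all_iff.2 fun n => (h_trunc n).trans (condExp_indicator hf (hA n))]
    with x hx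
  obtain ⟨n, hn⟩ := exists_nat_ge ‖g' x‖
  simpa [Set.indicator_of_mem (show x ∈ A n from hn)] using hx n

variable [MeasurableSpace α] [MeasurableSpace β] {ν : Measure α} [IsFiniteMeasure ν]
  {φ : α → β} {F : α → E} {P : β → E}

theorem comp_ae_eq_condExp_comap (hφ : Measurable φ) (hF : Integrable F ν)
    (hP : AEStronglyMeasurable P (ν.map φ))
    (hPF : ∀ s, MeasurableSet s → ∫ y in s, P y ∂(ν.map φ) = ∫ x in φ ⁻¹' s, F x ∂ν) :
    P ∘ φ =ᵐ[ν] ν[F | MeasurableSpace.comap φ ‹_›] := by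
  refine ae_eq_condExp_of_forall_setIntegral_eq_of_isFiniteMeasure hφ.comap_le hF
    ⟨hP.mk P ∘ φ, hP.stronglyMeasurable_mk.comp_measurable (comap_measurable φ),
      ae_of_ae_map hφ.aemeasurable hP.ae_eq_mk⟩ ?_
  rintro _ ⟨s, hs, rfl⟩
  exact (setIntegral_map hs hP hφ.aemeasurable).symm.trans (hPF s hs)

theorem memLp_map_and_eLpNorm_map_le_of_forall_setIntegral_eq (hφ : Measurable φ)
    {p : ℝ≥0∞} (hp : 1 ≤ p) (hF : MemLp F p ν) (hP : AEStronglyMeasurable P (ν.map φ))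
    (hPF : ∀ s, MeasurableSet s → ∫ y in s, P y ∂(ν.map φ) = ∫ x in φ ⁻¹' s, F x ∂ν) :
    MemLp P p (ν.map φ) ∧ eLpNorm P p (ν.map φ) ≤ eLpNorm F p ν := by
  have h := comp_ae_eq_condExp_comap hφ (hF.integrable hp) hP hPF
  rw [memLp_map_measure_iff hP hφ.aemeasurable, eLpNorm_map_measure hP hφ.aemeasurable,
    eLpNorm_congr_ae h]
  exact ⟨(hF.condExp hp).ae_eq h.symm, eLpNorm_condExp_le_eLpNorm F hp⟩

end

theorem integral_integral_indicator_add_eq_setIntegral_prod {G E : Type*} [Add G]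
    [MeasurableSpace G] [MeasurableAdd₂ G] [NormedAddCommGroup E] [NormedSpace ℝ E]
    {μ μ' : Measure G} [SFinite μ] [IsFiniteMeasure μ'] {f : G → E} (hf : Integrable f μ)
    {s : Set G} (hs : MeasurableSet s) :
    ∫ y, ∫ x, s.indicator (fun _ => f x) (x + y) ∂μ ∂μ' =
      ∫ w in (fun w : G × G => w.1 + w.2) ⁻¹' s, f w.1 ∂(μ.prod μ') := by
  rw [← integral_indicator (measurable_add hs),
    integral_prod_symm _ ((hf.comp_fst μ').indicator (measurable_add hs))]
  rfl

/-- For probability measures `μ, μ'` on `ℝ^d`, `1 ≤ p ≤ ∞` and `f ∈ L^p(μ)`, the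
Radon–Nikodym derivative `Pf` of `(f dμ)∗μ'` with respect to `μ∗μ'` (characterized by
`∬ χ_s(x+y) f(x) dμ dμ' = ∫_s Pf d(μ∗μ')` for all measurable `s`) lies in `L^p(μ∗μ')` and
`‖Pf‖_{L^p(μ∗μ')} ≤ ‖f‖_{L^p(μ)}`. -/
theorem stmt6 {d : ℕ} (μ μ' : Measure (Ed d)) [IsProbabilityMeasure μ]
    [IsProbabilityMeasure μ'] (p : ℝ≥0∞) (hp : 1 ≤ p)
    (f : Ed d → ℂ) (hf : MemLp f p μ)
    (Pf : Ed d → ℂ) (hPfm : AEStronglyMeasurable Pf (μ ∗ μ'))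
    (hPf : ∀ s : Set (Ed d), MeasurableSet s →
      ∫ y, ∫ x, s.indicator (fun _ => f x) (x + y) ∂μ ∂μ' = ∫ z in s, Pf z ∂(μ ∗ μ')) :
    MemLp Pf p (μ ∗ μ') ∧ eLpNorm Pf p (μ ∗ μ') ≤ eLpNorm f p μ := by
  have hbound := memLp_map_and_eLpNorm_map_le_of_forall_setIntegral_eq measurable_add hp
    (hf.comp_measurePreserving measurePreserving_fst) hPfm fun s hs => (hPf s hs).symm.trans
      (integral_integral_indicator_add_eq_setIntegral_prod (hf.integrable hp) hs)
  rwa [eLpNorm_comp_measurePreserving hf.1 measurePreserving_fst] at hbound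
end
end

section
/- Let μ be a compactly supported Borel probability measure on ℝ^d. If ν is a Bessel measure for μ, then for every r > 0 there exists a constant D > 0 such that ∫ sup_{|y|≤r} |(f dμ)^(x+y)|² dν(x) ≤ D ‖f‖²_{L²(μ)} for all f ∈ L²(μ). If ν is a frame measure for μ, then there exist constants δ > 0 and C > 0 such that C ‖f‖²_{L²(μ)} ≤ ∫ inf_{|y|≤δ} |(f dμ)^(x+y)|² dν(x) for all f ∈ L²(μ). -/
open MeasureTheory Filter Metric Complex Set
open scoped ENNReal NNReal Real Topology

noncomputable section

/-
Write `F = (f dμ)^`. Since `μ` lives in a ball of radius `M`, expanding the exponential in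
powers of `y` gives `F (x + y) = ∑ₙ (-2πi)ⁿ/n! ∑_{|a| = n} yᵃ (tᵃ f dμ)^(x)`, where each `tᵃ f`
has `L²(μ)`-norm at most `M^|a| ‖f‖`. Applying the Bessel bound to every `(tᵃ f dμ)^` and
Cauchy–Schwarz to the series bounds `∫ sup_{|y| ≤ r} |F (x + y) - F x|² dν(x)` by
`(e^{2πrMd} - 1)² B ‖f‖²`. As each of `|F (x + y)|²`, `|F x|²` is at most twice the other plus
twice `|F (x + y) - F x|²`, this gives the Bessel estimate at once, and the frame estimate once
`δ` is so small that the error term is below a quarter of the lower frame bound.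
-/

theorem ENNReal.two_mul_le_add_sq (a b : ℝ≥0∞) : 2 * a * b ≤ a ^ 2 + b ^ 2 := by
  rcases eq_or_ne a ⊤ with rfl | ha
  · simp
  rcases eq_or_ne b ⊤ with rfl | hb
  · simp
  lift a to ℝ≥0 using ha
  lift b to ℝ≥0 using hb
  exact_mod_cast _root_.two_mul_le_add_sq a b

theorem ENNReal.add_sq_le (a b : ℝ≥0∞) : (a + b) ^ 2 ≤ 2 * (a ^ 2 + b ^ 2) :=
  calc (a + b) ^ 2 = a ^ 2 + b ^ 2 + 2 * a * b := by ring
    _ ≤ a ^ 2 + b ^ 2 + (a ^ 2 + b ^ 2) := by gcongr; exact two_mul_le_add_sq a b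
    _ = 2 * (a ^ 2 + b ^ 2) := by ring

theorem ENNReal.tsum_mul_sq_le {ι : Type*} (w u : ι → ℝ≥0∞) :
    (∑' i, w i * u i) ^ 2 ≤ (∑' i, w i) * ∑' i, w i * u i ^ 2 := by
  have amgm : ∀ i j, 2 * ((w i * u i) * (w j * u j))
      ≤ w i * (w j * u j ^ 2) + (w i * u i ^ 2) * w j := fun i j =>
    calc 2 * ((w i * u i) * (w j * u j)) = (w i * w j) * (2 * u i * u j) := by ring
      _ ≤ (w i * w j) * (u i ^ 2 + u j ^ 2) := by gcongr; exact two_mul_le_add_sq _ _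
      _ = w i * (w j * u j ^ 2) + (w i * u i ^ 2) * w j := by ring
  refine (ENNReal.mul_le_mul_iff_right two_ne_zero ENNReal.ofNat_ne_top).1 ?_
  calc 2 * (∑' i, w i * u i) ^ 2 = ∑' i, ∑' j, 2 * ((w i * u i) * (w j * u j)) := by
        simp_rw [sq, ENNReal.tsum_mul_left, ← ENNReal.tsum_mul_right]
    _ ≤ ∑' i, ∑' j, (w i * (w j * u j ^ 2) + (w i * u i ^ 2) * w j) :=
        ENNReal.tsum_le_tsum fun i => ENNReal.tsum_le_tsum fun j => amgm i j
    _ = 2 * ((∑' i, w i) * ∑' i, w i * u i ^ 2) := by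
        simp_rw [ENNReal.tsum_add, ENNReal.tsum_mul_left, ENNReal.tsum_mul_right]
        ring

theorem MeasureTheory.lintegral_sq_tsum_le {α ι : Type*} [MeasurableSpace α] [Countable ι]
    {ν : Measure α} (w m : ι → ℝ≥0∞) (a : ι → α → ℝ≥0∞) (hm₀ : ∀ i, m i ≠ 0)
    (hm : ∀ i, m i ≠ ⊤) (ha : ∀ i, AEMeasurable (a i) ν) {C : ℝ≥0∞}
    (hC : ∀ i, ∫⁻ x, a i x ^ 2 ∂ν ≤ m i ^ 2 * C) :
    ∫⁻ x, (∑' i, w i * a i x) ^ 2 ∂ν ≤ (∑' i, w i * m i) ^ 2 * C := by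
  have hnorm : ∀ i, ∫⁻ x, (a i x / m i) ^ 2 ∂ν ≤ C := fun i => by
    simp_rw [div_eq_mul_inv, mul_pow, ← ENNReal.inv_pow]
    rw [lintegral_mul_const' _ _ (ENNReal.inv_ne_top.2 (pow_ne_zero 2 (hm₀ i))), ← div_eq_mul_inv]
    exact ENNReal.div_le_of_le_mul' (hC i)
  have hpt : ∀ x, (∑' i, w i * a i x) ^ 2
      ≤ (∑' i, w i * m i) * ∑' i, w i * m i * (a i x / m i) ^ 2 := fun x => by
    have h := ENNReal.tsum_mul_sq_le (fun i => w i * m i) (fun i => a i x / m i)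
    simpa only [mul_assoc, ENNReal.mul_div_cancel (hm₀ _) (hm _)] using h
  have hmeas : ∀ i, AEMeasurable (fun x => w i * m i * (a i x / m i) ^ 2) ν := fun i =>
    (((ha i).div_const _).pow_const 2).const_mul _
  calc ∫⁻ x, (∑' i, w i * a i x) ^ 2 ∂ν
      ≤ ∫⁻ x, (∑' i, w i * m i) * ∑' i, w i * m i * (a i x / m i) ^ 2 ∂ν := lintegral_mono hpt
    _ ≤ (∑' i, w i * m i) * ∑' i, w i * m i * C := by
        rw [lintegral_const_mul'' _ (AEMeasurable.tsum hmeas), lintegral_tsum hmeas]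
        gcongr with i
        rw [lintegral_const_mul'' _ (((ha i).div_const _).pow_const 2)]
        gcongr
        exact hnorm i
    _ = (∑' i, w i * m i) ^ 2 * C := by rw [ENNReal.tsum_mul_right, sq, mul_assoc]

theorem MeasureTheory.MemLp.lintegral_nnnorm_sq_ne_top {α E : Type*} [MeasurableSpace α]
    {μ : Measure α} [NormedAddCommGroup E] {f : α → E} (hf : MemLp f 2 μ) :
    ∫⁻ x, (‖f x‖₊ : ℝ≥0∞) ^ 2 ∂μ ≠ ⊤ := by
  have h := lintegral_rpow_enorm_lt_top_of_eLpNorm_lt_top two_ne_zero ENNReal.ofNat_ne_top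
    hf.eLpNorm_lt_top
  simpa [← enorm_eq_nnnorm] using h.ne

theorem MeasureTheory.exists_pos_ae_norm_le_of_isCompact {E : Type*} [NormedAddCommGroup E]
    [MeasurableSpace E] {μ : Measure E} (h : ∃ K : Set E, IsCompact K ∧ μ Kᶜ = 0) :
    ∃ M > 0, ∀ᵐ t ∂μ, ‖t‖ ≤ M := by
  obtain ⟨K, hK, hKc⟩ := h
  obtain ⟨R, hR⟩ := hK.isBounded.subset_closedBall 0
  refine ⟨max R 1, by positivity, ?_⟩
  filter_upwards [compl_compl K ▸ compl_mem_ae_iff.2 hKc] with t ht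
  exact (mem_closedBall_zero_iff.1 (hR ht)).trans (le_max_left R 1)

theorem Real.hasSum_pow_succ_div_factorial (z : ℝ) :
    HasSum (fun n => z ^ (n + 1) / (n + 1).factorial) (Real.exp z - 1) := by
  have h := (hasSum_nat_add_iff' 1).2 (NormedSpace.expSeries_div_hasSum_exp z)
  simpa [← Real.exp_eq_exp_ℝ] using h

namespace FrameMeasure

variable {d : ℕ} {μ : Measure (Ed d)} {f : Ed d → ℂ} {M : ℝ}

theorem ftm_eq_fourierIntegral :
    ftm μ f = VectorFourier.fourierIntegral Real.fourierChar μ (innerₗ (Ed d)) f := by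
  ext t
  rw [Real.vector_fourierIntegral_eq_integral_exp_smul, ftm]
  congr 1 with x
  rw [innerₗ_apply_apply, real_inner_comm, smul_eq_mul, mul_comm]
  push_cast
  ring_nf

theorem continuous_ftm (hf : Integrable f μ) : Continuous (ftm μ f) := by
  rw [ftm_eq_fourierIntegral]
  exact VectorFourier.fourierIntegral_continuous Real.continuous_fourierChar
    (by simpa only [innerₗ_apply_apply] using continuous_inner) hf

-- `tᵃ` for a word `a` of length `n`; summing over words absorbs the multinomial coefficients.
def coordMonomial {n : ℕ} (a : Fin n → Fin d) (t : Ed d) : ℂ := ∏ k, (t (a k) : ℂ)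

theorem continuous_coordMonomial {n : ℕ} (a : Fin n → Fin d) : Continuous (coordMonomial a) := by
  unfold coordMonomial
  fun_prop

theorem norm_coordMonomial_le {n : ℕ} (a : Fin n → Fin d) (t : Ed d) :
    ‖coordMonomial a t‖ ≤ ‖t‖ ^ n := by
  rw [coordMonomial, norm_prod]
  calc ∏ k, ‖((t (a k) : ℝ) : ℂ)‖ ≤ ∏ _k : Fin n, ‖t‖ :=
        Finset.prod_le_prod (fun _ _ => norm_nonneg _) fun k _ => by
          simpa only [Complex.norm_real] using PiLp.norm_apply_le t (a k)
    _ = ‖t‖ ^ n := by simp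

theorem inner_pow_eq_sum_coordMonomial (y t : Ed d) (n : ℕ) :
    ((inner ℝ y t : ℝ) : ℂ) ^ n = ∑ a : Fin n → Fin d, coordMonomial a y * coordMonomial a t := by
  simp only [PiLp.inner_apply, RCLike.inner_apply, conj_trivial, Complex.ofReal_sum,
    Complex.ofReal_mul, Fintype.sum_pow, coordMonomial, ← Finset.prod_mul_distrib]
  simp_rw [mul_comm]

theorem norm_exp_neg_two_pi_inner (x s : Ed d) :
    ‖Complex.exp (-(2 * Real.pi * (inner ℝ x s : ℝ)) * Complex.I)‖ = 1 := by
  rw [show (-(2 * Real.pi * (inner ℝ x s : ℝ)) : ℂ) = ((-(2 * Real.pi * inner ℝ x s) : ℝ) : ℂ) by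
    push_cast; ring]
  exact Complex.norm_exp_ofReal_mul_I _

def taylorCoeff (n : ℕ) : ℂ := (-2 * Real.pi * Complex.I) ^ n / n.factorial

theorem norm_taylorCoeff (n : ℕ) : ‖taylorCoeff n‖ = (2 * Real.pi) ^ n / n.factorial := by
  simp [taylorCoeff, abs_of_pos Real.pi_pos]

theorem hasSum_taylorCoeff_mul_inner_pow (y s : Ed d) :
    HasSum (fun n => taylorCoeff n * ((inner ℝ y s : ℝ) : ℂ) ^ n)
      (Complex.exp (-(2 * Real.pi * (inner ℝ y s : ℝ)) * Complex.I)) := by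
  have hterm : (fun n => taylorCoeff n * ((inner ℝ y s : ℝ) : ℂ) ^ n)
      = fun n => (-2 * Real.pi * Complex.I * (inner ℝ y s : ℝ)) ^ n / n.factorial := by
    funext n
    rw [taylorCoeff, div_mul_eq_mul_div, ← mul_pow]
  rw [hterm, show -(2 * Real.pi * (inner ℝ y s : ℝ)) * Complex.I
    = -2 * Real.pi * Complex.I * (inner ℝ y s : ℝ) by ring, Complex.exp_eq_exp_ℂ]
  exact NormedSpace.expSeries_div_hasSum_exp _

theorem norm_taylorCoeff_mul_inner_pow_le (y : Ed d) {s : Ed d} (hs : ‖s‖ ≤ M) (n : ℕ) :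
    ‖taylorCoeff n * ((inner ℝ y s : ℝ) : ℂ) ^ n‖ ≤ (2 * Real.pi * ‖y‖ * M) ^ n / n.factorial := by
  rw [norm_mul, norm_taylorCoeff, norm_pow, Complex.norm_real, Real.norm_eq_abs]
  calc (2 * Real.pi) ^ n / n.factorial * |inner ℝ y s| ^ n
      ≤ (2 * Real.pi) ^ n / n.factorial * (‖y‖ * M) ^ n := by
        gcongr
        exact (abs_real_inner_le_norm y s).trans (by gcongr)
    _ = (2 * Real.pi * ‖y‖ * M) ^ n / n.factorial := by ring

theorem integrable_mul_exp_neg_two_pi_inner (hf : Integrable f μ) (x : Ed d) :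
    Integrable (fun s => f s * Complex.exp (-(2 * Real.pi * (inner ℝ x s : ℝ)) * Complex.I)) μ :=
  hf.mul_bdd (c := 1) (by fun_prop)
    (ae_of_all _ fun s => (norm_exp_neg_two_pi_inner x s).le)

theorem integrable_mul_coordMonomial (hM : ∀ᵐ t ∂μ, ‖t‖ ≤ M) (hf : Integrable f μ) {n : ℕ}
    (a : Fin n → Fin d) : Integrable (fun s => f s * coordMonomial a s) μ :=
  hf.mul_bdd (continuous_coordMonomial a).aestronglyMeasurable <| by
    filter_upwards [hM] with s hs
    exact (norm_coordMonomial_le a s).trans (pow_le_pow_left₀ (norm_nonneg s) hs n)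

theorem hasSum_ftm_add (hM : ∀ᵐ t ∂μ, ‖t‖ ≤ M) (hf : Integrable f μ) (x y : Ed d) :
    HasSum (fun n => taylorCoeff n * ∑ a : Fin n → Fin d,
        coordMonomial a y * ftm μ (fun s => f s * coordMonomial a s) x) (ftm μ f (x + y)) := by
  set e : Ed d → Ed d → ℂ := fun x s => Complex.exp (-(2 * Real.pi * (inner ℝ x s : ℝ)) * Complex.I)
  set F : ℕ → Ed d → ℂ := fun n s => taylorCoeff n * ((inner ℝ y s : ℝ) : ℂ) ^ n * (f s * e x s)
  have hbound : ∀ n, ∀ᵐ s ∂μ,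
      ‖taylorCoeff n * ((inner ℝ y s : ℝ) : ℂ) ^ n‖ ≤ (2 * Real.pi * ‖y‖ * M) ^ n / n.factorial :=
    fun n => by
      filter_upwards [hM] with s hs
      exact norm_taylorCoeff_mul_inner_pow_le y hs n
  have hint : ∀ n, Integrable (F n) μ := fun n =>
    (integrable_mul_exp_neg_two_pi_inner hf x).bdd_mul (by fun_prop) (hbound n)
  have hsum : Summable fun n => ∫ s, ‖F n s‖ ∂μ := by
    refine ((Real.summable_pow_div_factorial (2 * Real.pi * ‖y‖ * M)).mul_right
      (∫ s, ‖f s‖ ∂μ)).of_nonneg_of_le (fun n => integral_nonneg fun s => norm_nonneg _)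
      fun n => ?_
    rw [← integral_const_mul]
    refine integral_mono_ae (hint n).norm (hf.norm.const_mul _) ?_
    filter_upwards [hbound n] with s hs
    rw [norm_mul, norm_mul (f s), show ‖e x s‖ = 1 from norm_exp_neg_two_pi_inner x s, mul_one]
    gcongr
  have htsum : ∀ s, ∑' n, F n s = f s * e (x + y) s := fun s => by
    simp only [F, e, inner_add_left, Complex.ofReal_add, mul_add, neg_add, add_mul,
      Complex.exp_add, tsum_mul_right, (hasSum_taylorCoeff_mul_inner_pow y s).tsum_eq]
    ring
  have hterm : ∀ n, ∫ s, F n s ∂μ = taylorCoeff n * ∑ a : Fin n → Fin d,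
      coordMonomial a y * ftm μ (fun s => f s * coordMonomial a s) x := fun n => by
    have hF : F n = fun s => ∑ a : Fin n → Fin d,
        taylorCoeff n * coordMonomial a y * (f s * coordMonomial a s * e x s) := by
      funext s
      simp only [F, inner_pow_eq_sum_coordMonomial, Finset.sum_mul, Finset.mul_sum]
      exact Finset.sum_congr rfl fun a _ => by ring
    rw [hF, integral_finsetSum _ fun a _ => (integrable_mul_exp_neg_two_pi_inner
      (integrable_mul_coordMonomial hM hf a) x).const_mul _, Finset.mul_sum]
    exact Finset.sum_congr rfl fun a _ => by rw [integral_const_mul, ftm, mul_assoc]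
  have h := hasSum_integral_of_summable_integral_norm hint hsum
  simp only [hterm, htsum] at h
  exact h

theorem norm_taylorCoeff_mul_sum_le {r : ℝ} {y : Ed d} (hy : ‖y‖ ≤ r) (n : ℕ)
    (G : (Fin n → Fin d) → ℂ) :
    ‖taylorCoeff n * ∑ a : Fin n → Fin d, coordMonomial a y * G a‖
      ≤ ∑ a : Fin n → Fin d, (2 * Real.pi * r) ^ n / n.factorial * ‖G a‖ := by
  rw [norm_mul, norm_taylorCoeff, ← Finset.mul_sum]
  have hy' : ‖y‖ ^ n ≤ r ^ n := pow_le_pow_left₀ (norm_nonneg y) hy n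
  calc (2 * Real.pi) ^ n / n.factorial * ‖∑ a : Fin n → Fin d, coordMonomial a y * G a‖
      ≤ (2 * Real.pi) ^ n / n.factorial * ∑ a : Fin n → Fin d, r ^ n * ‖G a‖ := by
        gcongr
        refine (norm_sum_le _ _).trans (Finset.sum_le_sum fun a _ => ?_)
        rw [norm_mul]
        gcongr
        exact (norm_coordMonomial_le a y).trans hy'
    _ = (2 * Real.pi * r) ^ n / n.factorial * ∑ a : Fin n → Fin d, ‖G a‖ := by
        rw [← Finset.mul_sum, mul_pow]
        ring

/-- The Taylor series of `(f dμ)^(x + y) - (f dμ)^(x)` for `‖y‖ ≤ r` with every term replaced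
by a bound for its modulus. -/
def taylorMajorant (μ : Measure (Ed d)) (f : Ed d → ℂ) (r : ℝ) (x : Ed d) : ℝ≥0∞ :=
  ∑' p : (n : ℕ) × (Fin (n + 1) → Fin d),
    ENNReal.ofReal ((2 * Real.pi * r) ^ (p.1 + 1) / (p.1 + 1).factorial)
      * ‖ftm μ (fun s => f s * coordMonomial p.2 s) x‖₊

theorem nnnorm_ftm_add_sub_le (hM : ∀ᵐ t ∂μ, ‖t‖ ≤ M) (hf : Integrable f μ) {r : ℝ}
    {y : Ed d} (hy : ‖y‖ ≤ r) (x : Ed d) :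
    (‖ftm μ f (x + y) - ftm μ f x‖₊ : ℝ≥0∞) ≤ taylorMajorant μ f r x := by
  have hr : 0 ≤ r := (norm_nonneg y).trans hy
  have h₀ : taylorCoeff 0 * ∑ a : Fin 0 → Fin d,
      coordMonomial a y * ftm μ (fun s => f s * coordMonomial a s) x = ftm μ f x := by
    simp [taylorCoeff, coordMonomial]
  have h := (hasSum_nat_add_iff' 1).2 (hasSum_ftm_add hM hf x y)
  rw [Finset.sum_range_one, h₀] at h
  rw [← h.tsum_eq, taylorMajorant, ENNReal.tsum_sigma']
  refine (enorm_tsum_le_tsum_enorm (ε := ℂ)).trans (ENNReal.tsum_le_tsum fun n => ?_)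
  rw [tsum_fintype, ← ofReal_norm]
  refine (ENNReal.ofReal_le_ofReal (norm_taylorCoeff_mul_sum_le hy (n + 1) _)).trans_eq ?_
  rw [ENNReal.ofReal_sum_of_nonneg fun a _ => by positivity]
  refine Finset.sum_congr rfl fun a _ => ?_
  rw [ENNReal.ofReal_mul (by positivity), ofReal_norm]
  rfl

theorem measurable_taylorMajorant (hM : ∀ᵐ t ∂μ, ‖t‖ ≤ M) (hf : Integrable f μ) (r : ℝ) :
    Measurable (taylorMajorant μ f r) :=
  Measurable.tsum fun p => measurable_const.mul
    (continuous_ftm (integrable_mul_coordMonomial hM hf p.2)).measurable.nnnorm.coe_nnreal_ennreal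

theorem ae_norm_mul_coordMonomial_le (hM : ∀ᵐ t ∂μ, ‖t‖ ≤ M) (f : Ed d → ℂ) {n : ℕ}
    (a : Fin n → Fin d) : ∀ᵐ s ∂μ, ‖f s * coordMonomial a s‖ ≤ M ^ n * ‖f s‖ := by
  filter_upwards [hM] with s hs
  rw [norm_mul, mul_comm]
  gcongr
  exact (norm_coordMonomial_le a s).trans (pow_le_pow_left₀ (norm_nonneg s) hs n)

theorem memLp_mul_coordMonomial (hM : ∀ᵐ t ∂μ, ‖t‖ ≤ M) (hf : MemLp f 2 μ) {n : ℕ}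
    (a : Fin n → Fin d) : MemLp (fun s => f s * coordMonomial a s) 2 μ :=
  hf.of_le_mul (hf.1.mul (continuous_coordMonomial a).aestronglyMeasurable)
    (ae_norm_mul_coordMonomial_le hM f a)

theorem lintegral_mul_coordMonomial_sq_le (hM₀ : 0 ≤ M) (hM : ∀ᵐ t ∂μ, ‖t‖ ≤ M)
    (f : Ed d → ℂ) {n : ℕ} (a : Fin n → Fin d) :
    ∫⁻ s, (‖f s * coordMonomial a s‖₊ : ℝ≥0∞) ^ 2 ∂μ
      ≤ ENNReal.ofReal (M ^ n) ^ 2 * ∫⁻ s, (‖f s‖₊ : ℝ≥0∞) ^ 2 ∂μ := by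
  rw [← lintegral_const_mul' _ _ (by finiteness)]
  refine lintegral_mono_ae ?_
  filter_upwards [ae_norm_mul_coordMonomial_le hM f a] with s hs
  rw [← mul_pow]
  gcongr
  rw [← enorm_eq_nnnorm, ← enorm_eq_nnnorm, ← ofReal_norm, ← ofReal_norm,
    ← ENNReal.ofReal_mul (by positivity)]
  exact ENNReal.ofReal_le_ofReal hs

theorem tsum_taylorMajorant_coeff_mul_pow {r : ℝ} (hr : 0 ≤ r) (hM₀ : 0 ≤ M) :
    ∑' p : (n : ℕ) × (Fin (n + 1) → Fin d),
      ENNReal.ofReal ((2 * Real.pi * r) ^ (p.1 + 1) / (p.1 + 1).factorial)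
        * ENNReal.ofReal (M ^ (p.1 + 1))
      = ENNReal.ofReal (Real.exp (2 * Real.pi * r * (M * d)) - 1) := by
  have h := Real.hasSum_pow_succ_div_factorial (2 * Real.pi * r * (M * d))
  rw [ENNReal.tsum_sigma', ← h.tsum_eq, ENNReal.ofReal_tsum_of_nonneg (fun n => by positivity)
    h.summable]
  refine tsum_congr fun n => ?_
  dsimp only
  rw [tsum_fintype, Finset.sum_const, Finset.card_univ, Fintype.card_fun, Fintype.card_fin,
    Fintype.card_fin, nsmul_eq_mul, ← ENNReal.ofReal_natCast,
    ← ENNReal.ofReal_mul (by positivity), ← ENNReal.ofReal_mul (by positivity)]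
  congr 1
  push_cast
  ring

theorem lintegral_taylorMajorant_sq_le [IsFiniteMeasure μ] {ν : Measure (Ed d)} {B r : ℝ}
    (hB : IsBesselBound μ ν B) (hM₀ : 0 < M) (hM : ∀ᵐ t ∂μ, ‖t‖ ≤ M) (hf : MemLp f 2 μ)
    (hr : 0 ≤ r) :
    ∫⁻ x, taylorMajorant μ f r x ^ 2 ∂ν
      ≤ ENNReal.ofReal (Real.exp (2 * Real.pi * r * (M * d)) - 1) ^ 2
        * (ENNReal.ofReal B * ∫⁻ x, (‖f x‖₊ : ℝ≥0∞) ^ 2 ∂μ) := by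
  have hmeas : ∀ p : (n : ℕ) × (Fin (n + 1) → Fin d), AEMeasurable
      (fun x => (‖ftm μ (fun s => f s * coordMonomial p.2 s) x‖₊ : ℝ≥0∞)) ν := fun p =>
    (continuous_ftm (integrable_mul_coordMonomial hM (hf.integrable (by norm_num))
      p.2)).measurable.nnnorm.coe_nnreal_ennreal.aemeasurable
  have hC : ∀ p : (n : ℕ) × (Fin (n + 1) → Fin d),
      ∫⁻ x, (‖ftm μ (fun s => f s * coordMonomial p.2 s) x‖₊ : ℝ≥0∞) ^ 2 ∂ν
        ≤ ENNReal.ofReal (M ^ (p.1 + 1)) ^ 2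
          * (ENNReal.ofReal B * ∫⁻ x, (‖f x‖₊ : ℝ≥0∞) ^ 2 ∂μ) := fun p =>
    calc ∫⁻ x, (‖ftm μ (fun s => f s * coordMonomial p.2 s) x‖₊ : ℝ≥0∞) ^ 2 ∂ν
        ≤ ENNReal.ofReal B * ∫⁻ s, (‖f s * coordMonomial p.2 s‖₊ : ℝ≥0∞) ^ 2 ∂μ :=
          hB _ (memLp_mul_coordMonomial hM hf p.2)
      _ ≤ ENNReal.ofReal B * (ENNReal.ofReal (M ^ (p.1 + 1)) ^ 2
            * ∫⁻ s, (‖f s‖₊ : ℝ≥0∞) ^ 2 ∂μ) := by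
          gcongr
          exact lintegral_mul_coordMonomial_sq_le hM₀.le hM f p.2
      _ = _ := by ring
  have h := lintegral_sq_tsum_le
    (fun p => ENNReal.ofReal ((2 * Real.pi * r) ^ (p.1 + 1) / (p.1 + 1).factorial)) _ _
    (fun p => by simp [pow_pos hM₀]) (fun p => ENNReal.ofReal_ne_top) hmeas hC
  rwa [tsum_taylorMajorant_coeff_mul_pow hr hM₀.le] at h

theorem iSup_nnnorm_ftm_add_sq_le (hM : ∀ᵐ t ∂μ, ‖t‖ ≤ M) (hf : Integrable f μ) (r : ℝ)
    (x : Ed d) :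
    ⨆ y ∈ closedBall (0 : Ed d) r, (‖ftm μ f (x + y)‖₊ : ℝ≥0∞) ^ 2
      ≤ 2 * ((‖ftm μ f x‖₊ : ℝ≥0∞) ^ 2 + taylorMajorant μ f r x ^ 2) := by
  refine iSup₂_le fun y hy => (pow_le_pow_left₀ zero_le ?_ 2).trans (ENNReal.add_sq_le _ _)
  calc (‖ftm μ f (x + y)‖₊ : ℝ≥0∞)
      ≤ ‖ftm μ f x‖₊ + ‖ftm μ f (x + y) - ftm μ f x‖₊ := by
        exact_mod_cast nnnorm_le_nnnorm_add_nnnorm_sub' _ _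
    _ ≤ ‖ftm μ f x‖₊ + taylorMajorant μ f r x := by
        gcongr
        exact nnnorm_ftm_add_sub_le hM hf (mem_closedBall_zero_iff.1 hy) x

theorem nnnorm_ftm_sq_le_iInf (hM : ∀ᵐ t ∂μ, ‖t‖ ≤ M) (hf : Integrable f μ) (r : ℝ)
    (x : Ed d) :
    (‖ftm μ f x‖₊ : ℝ≥0∞) ^ 2 ≤ 2 * ((⨅ y ∈ closedBall (0 : Ed d) r,
      (‖ftm μ f (x + y)‖₊ : ℝ≥0∞) ^ 2) + taylorMajorant μ f r x ^ 2) := by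
  simp_rw [ENNReal.iInf_add, ENNReal.mul_iInf_of_ne two_ne_zero ENNReal.ofNat_ne_top]
  refine le_iInf₂ fun y hy => (pow_le_pow_left₀ zero_le ?_ 2).trans (ENNReal.add_sq_le _ _)
  calc (‖ftm μ f x‖₊ : ℝ≥0∞)
      ≤ ‖ftm μ f (x + y)‖₊ + ‖ftm μ f (x + y) - ftm μ f x‖₊ := by
        exact_mod_cast nnnorm_le_nnnorm_add_nnnorm_sub _ _
    _ ≤ ‖ftm μ f (x + y)‖₊ + taylorMajorant μ f r x := by
        gcongr
        exact nnnorm_ftm_add_sub_le hM hf (mem_closedBall_zero_iff.1 hy) x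

theorem lintegral_nnnorm_ftm_sq_add_taylorMajorant_sq_le [IsFiniteMeasure μ]
    {ν : Measure (Ed d)} {B r : ℝ} (hB : IsBesselBound μ ν B) (hM₀ : 0 < M)
    (hM : ∀ᵐ t ∂μ, ‖t‖ ≤ M) (hf : MemLp f 2 μ) (hr : 0 ≤ r) :
    ∫⁻ x, 2 * ((‖ftm μ f x‖₊ : ℝ≥0∞) ^ 2 + taylorMajorant μ f r x ^ 2) ∂ν
      ≤ 2 * (1 + ENNReal.ofReal (Real.exp (2 * Real.pi * r * (M * d)) - 1) ^ 2)
        * (ENNReal.ofReal B * ∫⁻ x, (‖f x‖₊ : ℝ≥0∞) ^ 2 ∂μ) := by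
  have hmeas : AEMeasurable (fun x => (‖ftm μ f x‖₊ : ℝ≥0∞) ^ 2) ν :=
    ((continuous_ftm (hf.integrable (by norm_num))).measurable.nnnorm.coe_nnreal_ennreal.pow_const
      2).aemeasurable
  rw [lintegral_const_mul' _ _ ENNReal.ofNat_ne_top, lintegral_add_left' hmeas, mul_assoc, add_mul,
    one_mul]
  gcongr
  · exact hB f hf
  · exact lintegral_taylorMajorant_sq_le hB hM₀ hM hf hr

theorem exists_lintegral_iSup_le [IsFiniteMeasure μ] {ν : Measure (Ed d)} {B : ℝ}
    (hB : IsBesselBound μ ν B) (hB₀ : 0 < B) (hM₀ : 0 < M) (hM : ∀ᵐ t ∂μ, ‖t‖ ≤ M) {r : ℝ}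
    (hr : 0 < r) :
    ∃ D > (0 : ℝ), ∀ f : Ed d → ℂ, MemLp f 2 μ →
      ∫⁻ x, ⨆ y ∈ closedBall (0 : Ed d) r, (‖ftm μ f (x + y)‖₊ : ℝ≥0∞) ^ 2 ∂ν
        ≤ ENNReal.ofReal D * ∫⁻ x, (‖f x‖₊ : ℝ≥0∞) ^ 2 ∂μ := by
  set κ := Real.exp (2 * Real.pi * r * (M * d)) - 1
  have hκ : 0 ≤ κ := sub_nonneg.2 (Real.one_le_exp (by positivity))
  refine ⟨2 * (1 + κ ^ 2) * B, by positivity, fun f hf => ?_⟩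
  calc ∫⁻ x, ⨆ y ∈ closedBall (0 : Ed d) r, (‖ftm μ f (x + y)‖₊ : ℝ≥0∞) ^ 2 ∂ν
      ≤ ∫⁻ x, 2 * ((‖ftm μ f x‖₊ : ℝ≥0∞) ^ 2 + taylorMajorant μ f r x ^ 2) ∂ν :=
        lintegral_mono fun x => iSup_nnnorm_ftm_add_sq_le hM (hf.integrable (by norm_num)) r x
    _ ≤ 2 * (1 + ENNReal.ofReal κ ^ 2) * (ENNReal.ofReal B * ∫⁻ x, (‖f x‖₊ : ℝ≥0∞) ^ 2 ∂μ) :=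
        lintegral_nnnorm_ftm_sq_add_taylorMajorant_sq_le hB hM₀ hM hf hr.le
    _ = ENNReal.ofReal (2 * (1 + κ ^ 2) * B) * ∫⁻ x, (‖f x‖₊ : ℝ≥0∞) ^ 2 ∂μ := by
        rw [ENNReal.ofReal_mul (by positivity), ENNReal.ofReal_mul zero_le_two,
          ENNReal.ofReal_add zero_le_one (by positivity), ENNReal.ofReal_pow hκ]
        simp only [ENNReal.ofReal_ofNat, ENNReal.ofReal_one]
        ring

-- The infimum over the ball is not known to be measurable, so additivity of the integral
-- rests on the measurability of the majorant.
theorem lintegral_nnnorm_ftm_sq_le {ν : Measure (Ed d)} (hM : ∀ᵐ t ∂μ, ‖t‖ ≤ M)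
    (hf : Integrable f μ) (r : ℝ) :
    ∫⁻ x, (‖ftm μ f x‖₊ : ℝ≥0∞) ^ 2 ∂ν
      ≤ 2 * ∫⁻ x, ⨅ y ∈ closedBall (0 : Ed d) r, (‖ftm μ f (x + y)‖₊ : ℝ≥0∞) ^ 2 ∂ν
        + 2 * ∫⁻ x, taylorMajorant μ f r x ^ 2 ∂ν := by
  rw [← mul_add, ← lintegral_add_right' _
    ((measurable_taylorMajorant hM hf r).pow_const 2).aemeasurable,
    ← lintegral_const_mul' _ _ ENNReal.ofNat_ne_top]
  exact lintegral_mono fun x => nnnorm_ftm_sq_le_iInf hM hf r x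

theorem exists_le_lintegral_iInf [IsFiniteMeasure μ] {ν : Measure (Ed d)} {A B : ℝ}
    (hA : 0 < A) (hAB : IsFrameBounds μ ν A B) (hM₀ : 0 < M) (hM : ∀ᵐ t ∂μ, ‖t‖ ≤ M) :
    ∃ δ > (0 : ℝ), ∃ C > (0 : ℝ), ∀ f : Ed d → ℂ, MemLp f 2 μ →
      ENNReal.ofReal C * ∫⁻ x, (‖f x‖₊ : ℝ≥0∞) ^ 2 ∂μ
        ≤ ∫⁻ x, ⨅ y ∈ closedBall (0 : Ed d) δ, (‖ftm μ f (x + y)‖₊ : ℝ≥0∞) ^ 2 ∂ν := by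
  set κ : ℝ → ℝ := fun δ => Real.exp (2 * Real.pi * δ * (M * d)) - 1
  have hsmall : ∀ᶠ δ in 𝓝 0, κ δ ^ 2 * B < A / 4 :=
    (by fun_prop : Continuous fun δ => κ δ ^ 2 * B).continuousAt.eventually_lt
      continuousAt_const (by simpa [κ] using hA)
  obtain ⟨δ, hδ, hδ₀⟩ :=
    ((hsmall.filter_mono nhdsWithin_le_nhds).and (self_mem_nhdsWithin (s := Ioi 0))).exists
  have hκ : 0 ≤ κ δ := sub_nonneg.2 (Real.one_le_exp (by positivity))
  refine ⟨δ, hδ₀, A / 4, by positivity, fun f hf => ?_⟩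
  set I := ∫⁻ x, (‖f x‖₊ : ℝ≥0∞) ^ 2 ∂μ
  set X := ∫⁻ x, ⨅ y ∈ closedBall (0 : Ed d) δ, (‖ftm μ f (x + y)‖₊ : ℝ≥0∞) ^ 2 ∂ν
  set c := ENNReal.ofReal (A / 4)
  have hcI : c * I ≠ ⊤ := ENNReal.mul_ne_top ENNReal.ofReal_ne_top hf.lintegral_nnnorm_sq_ne_top
  have hmaj : ENNReal.ofReal (κ δ) ^ 2 * (ENNReal.ofReal B * I) ≤ c * I := by
    rw [← mul_assoc, ← ENNReal.ofReal_pow hκ, ← ENNReal.ofReal_mul (by positivity)]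
    exact mul_le_mul_left (ENNReal.ofReal_le_ofReal hδ.le) I
  have key : 2 * (c * I) + 2 * (c * I) ≤ 2 * X + 2 * (c * I) :=
    calc 2 * (c * I) + 2 * (c * I) = ENNReal.ofReal A * I := by
          rw [show A = 4 * (A / 4) by ring, ENNReal.ofReal_mul zero_le_four, ENNReal.ofReal_ofNat]
          ring
      _ ≤ ∫⁻ x, (‖ftm μ f x‖₊ : ℝ≥0∞) ^ 2 ∂ν := (hAB f hf).1
      _ ≤ 2 * X + 2 * ∫⁻ x, taylorMajorant μ f δ x ^ 2 ∂ν :=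
          lintegral_nnnorm_ftm_sq_le hM (hf.integrable (by norm_num)) δ
      _ ≤ 2 * X + 2 * (c * I) := by
          gcongr
          exact (lintegral_taylorMajorant_sq_le (fun f hf => (hAB f hf).2) hM₀ hM hf
            hδ₀.le).trans hmaj
  exact (ENNReal.mul_le_mul_iff_right two_ne_zero ENNReal.ofNat_ne_top).1
    (ENNReal.le_of_add_le_add_right (ENNReal.mul_ne_top ENNReal.ofNat_ne_top hcI) key)

end FrameMeasure

open FrameMeasure in
/-- Stability: if `ν` is a Bessel measure for the compactly supported probability measure `μ`,
then for every `r > 0` there is `D > 0` with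
`∫ sup_{|y|≤r} |(f dμ)^(x+y)|² dν(x) ≤ D‖f‖²_{L²(μ)}`; if `ν` is a frame measure then there are
`δ, C > 0` with `C‖f‖²_{L²(μ)} ≤ ∫ inf_{|y|≤δ} |(f dμ)^(x+y)|² dν(x)`. -/
theorem stmt8 {d : ℕ} (μ : Measure (Ed d)) [IsProbabilityMeasure μ]
    (hμc : ∃ K : Set (Ed d), IsCompact K ∧ μ Kᶜ = 0) (ν : Measure (Ed d)) :
    ((∃ B > (0 : ℝ), IsBesselBound μ ν B) → ∀ r > (0 : ℝ), ∃ D > (0 : ℝ),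
      ∀ f : Ed d → ℂ, MemLp f 2 μ →
        ∫⁻ x, ⨆ y ∈ Metric.closedBall (0 : Ed d) r, (‖ftm μ f (x + y)‖₊ : ℝ≥0∞) ^ 2 ∂ν ≤
          ENNReal.ofReal D * ∫⁻ x, (‖f x‖₊ : ℝ≥0∞) ^ 2 ∂μ) ∧
    ((∃ A B : ℝ, 0 < A ∧ 0 < B ∧ IsFrameBounds μ ν A B) → ∃ δ > (0 : ℝ), ∃ C > (0 : ℝ),
      ∀ f : Ed d → ℂ, MemLp f 2 μ →
        ENNReal.ofReal C * ∫⁻ x, (‖f x‖₊ : ℝ≥0∞) ^ 2 ∂μ ≤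
          ∫⁻ x, ⨅ y ∈ Metric.closedBall (0 : Ed d) δ, (‖ftm μ f (x + y)‖₊ : ℝ≥0∞) ^ 2 ∂ν) := by
  obtain ⟨M, hM₀, hM⟩ := exists_pos_ae_norm_le_of_isCompact hμc
  refine ⟨fun ⟨B, hB₀, hB⟩ r hr => exists_lintegral_iSup_le hB hB₀ hM₀ hM hr,
    fun ⟨A, B, hA, _, hAB⟩ => exists_le_lintegral_iInf hA hAB hM₀ hM⟩
end
end

section
/- Let ν be a locally finite Borel measure on ℝ^d and let ρ be a Borel probability measure on ℝ^d. Then dim(ν∗ρ) = dim ν; that is, the Beurling dimension is invariant under convolution with probability measures. -/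
open MeasureTheory Filter Metric Complex Set
open scoped ENNReal NNReal Real Topology

noncomputable section

/-! Convolving with `ρ` only averages translates of `ν`, so no cube gains more `ν ∗ ρ`-mass than the
heaviest cube of the same side carries under `ν`: `D_α(ν ∗ ρ) ≤ D_α(ν)`. Conversely, some cube `c + L·Q`
has positive `ρ`-mass `ε`, and then `ν ∗ ρ` gives the enlarged cube `(z + c) + (R + L)·Q` at least
`ε · ν(z + R·Q)`; since `(R + L)^α ≤ 2^α R^α` once `R ≥ L`, this gives `ε · D_α(ν) ≤ 2^α · D_α(ν ∗ ρ)`.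
Hence `D_α(ν ∗ ρ)` and `D_α(ν)` are infinite for the same `α`. -/

section Cube

variable {d : ℕ}

lemma measurableSet_cube (x : Ed d) (R : ℝ) : MeasurableSet (cube x R) := by
  have : cube x R = ⋂ i, (fun y : Ed d => y i) ⁻¹' Ico (x i) (x i + R) := by
    ext y; simp [cube]
  rw [this]
  exact .iInter fun i => (by fun_prop : Continuous fun y : Ed d => y i).measurable measurableSet_Ico

lemma preimage_add_const_cube (y z : Ed d) (R : ℝ) :
    (· + y) ⁻¹' cube z R = cube (z - y) R := by
  ext u
  simp only [cube, mem_preimage, mem_ofPred_eq, mem_Ico, PiLp.add_apply, PiLp.sub_apply]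
  refine forall_congr' fun i => and_congr ?_ ?_ <;> constructor <;> intro h <;> linarith

lemma add_mem_cube_add {x y z c : Ed d} {R L : ℝ} (hx : x ∈ cube z R) (hy : y ∈ cube c L) :
    x + y ∈ cube (z + c) (R + L) := fun i => by
  obtain ⟨hx₁, hx₂⟩ := hx i
  obtain ⟨hy₁, hy₂⟩ := hy i
  simp only [PiLp.add_apply, mem_Ico]
  constructor <;> linarith

lemma iUnion_cube_eq_univ :
    ⋃ n : ℕ, cube (WithLp.toLp 2 fun _ => -(n : ℝ) : Ed d) (2 * n) = univ := by
  refine eq_univ_of_forall fun y => mem_iUnion.2 ?_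
  obtain ⟨n, hn⟩ := exists_nat_gt ‖y‖
  refine ⟨n, fun i => ?_⟩
  have hyi : |y i| < n := (PiLp.norm_apply_le y i).trans_lt hn
  rw [abs_lt] at hyi
  simp only [mem_Ico]
  constructor <;> linarith

lemma exists_cube_measure_pos {ρ : Measure (Ed d)} (hρ : ρ ≠ 0) :
    ∃ c L, 0 ≤ L ∧ 0 < ρ (cube c L) := by
  by_contra! h
  have hnull : ∀ n : ℕ, ρ (cube (WithLp.toLp 2 fun _ => -(n : ℝ)) (2 * n)) = 0 :=
    fun n => nonpos_iff_eq_zero.1 (h _ _ (by positivity))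
  have := measure_iUnion_null hnull
  rw [iUnion_cube_eq_univ, Measure.measure_univ_eq_zero] at this
  exact hρ this

end Cube

section Convolution

variable {d : ℕ} (ν ρ : Measure (Ed d))

lemma conv_apply_eq_lintegral [SFinite ν] [SFinite ρ] {E : Set (Ed d)} (hE : MeasurableSet E) :
    (ν ∗ ρ) E = ∫⁻ y, ν ((· + y) ⁻¹' E) ∂ρ := by
  rw [Measure.conv, Measure.map_apply (by fun_prop) hE,
    Measure.prod_apply_symm ((by fun_prop : Measurable fun p : Ed d × Ed d => p.1 + p.2) hE)]
  rfl

lemma conv_cube_le_iSup [SFinite ν] [IsProbabilityMeasure ρ] (z : Ed d) (R : ℝ) :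
    (ν ∗ ρ) (cube z R) ≤ ⨆ w, ν (cube w R) := by
  rw [conv_apply_eq_lintegral ν ρ (measurableSet_cube z R)]
  calc ∫⁻ y, ν ((· + y) ⁻¹' cube z R) ∂ρ ≤ ∫⁻ _, ⨆ w, ν (cube w R) ∂ρ :=
        lintegral_mono fun y => by
          rw [preimage_add_const_cube]; exact le_iSup (fun w => ν (cube w R)) (z - y)
    _ = ⨆ w, ν (cube w R) := by simp

lemma mul_le_conv_cube [SFinite ν] [SFinite ρ] (z c : Ed d) (R L : ℝ) :
    ρ (cube c L) * ν (cube z R) ≤ (ν ∗ ρ) (cube (z + c) (R + L)) := by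
  rw [conv_apply_eq_lintegral ν ρ (measurableSet_cube _ _), mul_comm, ← setLIntegral_const]
  calc ∫⁻ _ in cube c L, ν (cube z R) ∂ρ
      ≤ ∫⁻ y in cube c L, ν ((· + y) ⁻¹' cube (z + c) (R + L)) ∂ρ :=
        setLIntegral_mono' (measurableSet_cube c L) fun y hy =>
          measure_mono fun x hx => add_mem_cube_add hx hy
    _ ≤ ∫⁻ y, ν ((· + y) ⁻¹' cube (z + c) (R + L)) ∂ρ := setLIntegral_le_lintegral _ _

lemma beurlingDensity_conv_le [SFinite ν] [IsProbabilityMeasure ρ] (α : ℝ) :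
    beurlingDensity (ν ∗ ρ) α ≤ beurlingDensity ν α :=
  limsup_le_limsup (.of_forall fun R => iSup_le fun z =>
    (ENNReal.div_le_div_right (conv_cube_le_iSup ν ρ z R) _).trans_eq (ENNReal.iSup_div _ _))

lemma rpow_add_le_two_rpow_mul {R L α : ℝ} (hL : 0 ≤ L) (hLR : L ≤ R) (hα : 0 ≤ α) :
    (R + L) ^ α ≤ 2 ^ α * R ^ α := by
  rw [← Real.mul_rpow zero_le_two (by linarith)]
  exact Real.rpow_le_rpow (by linarith) (by linarith) hα

lemma mul_beurlingDensity_le_conv [SFinite ν] [IsFiniteMeasure ρ] (c : Ed d) {L α : ℝ}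
    (hL : 0 ≤ L) (hα : 0 ≤ α) :
    ρ (cube c L) * beurlingDensity ν α ≤ ENNReal.ofReal (2 ^ α) * beurlingDensity (ν ∗ ρ) α := by
  set G : ℝ → ℝ≥0∞ := fun R => ⨆ x, (ν ∗ ρ) (cube x R) / ENNReal.ofReal (R ^ α)
  have hcube : ∀ R, L ≤ R → ∀ z, ρ (cube c L) * (ν (cube z R) / ENNReal.ofReal (R ^ α))
      ≤ ENNReal.ofReal (2 ^ α) * G (R + L) := fun R hLR z => by
    have h2 : ENNReal.ofReal (2 ^ α) ≠ 0 := (ENNReal.ofReal_pos.2 (by positivity)).ne'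
    calc ρ (cube c L) * (ν (cube z R) / ENNReal.ofReal (R ^ α))
        ≤ (ν ∗ ρ) (cube (z + c) (R + L)) / ENNReal.ofReal (R ^ α) := by
          rw [← mul_div_assoc]; exact ENNReal.div_le_div_right (mul_le_conv_cube ν ρ z c R L) _
      _ = ENNReal.ofReal (2 ^ α) * (ν ∗ ρ) (cube (z + c) (R + L))
            / (ENNReal.ofReal (2 ^ α) * ENNReal.ofReal (R ^ α)) :=
          (ENNReal.mul_div_mul_left _ _ h2 ENNReal.ofReal_ne_top).symm
      _ ≤ ENNReal.ofReal (2 ^ α) * (ν ∗ ρ) (cube (z + c) (R + L))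
            / ENNReal.ofReal ((R + L) ^ α) := by
          refine ENNReal.div_le_div_left ?_ _
          rw [← ENNReal.ofReal_mul (by positivity)]
          exact ENNReal.ofReal_le_ofReal (rpow_add_le_two_rpow_mul hL hLR hα)
      _ ≤ ENNReal.ofReal (2 ^ α) * G (R + L) := by
          rw [mul_div_assoc]
          gcongr
          exact le_iSup_of_le (z + c) le_rfl
  calc ρ (cube c L) * beurlingDensity ν α
      = limsup (fun R => ρ (cube c L) * ⨆ z, ν (cube z R) / ENNReal.ofReal (R ^ α)) atTop :=
        (ENNReal.limsup_const_mul_of_ne_top (measure_ne_top ρ _)).symm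
    _ ≤ limsup (fun R => ENNReal.ofReal (2 ^ α) * G (R + L)) atTop :=
        limsup_le_limsup ((eventually_ge_atTop L).mono fun R hLR => by
          show _ * _ ≤ _
          rw [ENNReal.mul_iSup]; exact iSup_le (hcube R hLR))
    _ = ENNReal.ofReal (2 ^ α) * limsup (G ∘ (· + L)) atTop :=
        ENNReal.limsup_const_mul_of_ne_top ENNReal.ofReal_ne_top
    _ ≤ ENNReal.ofReal (2 ^ α) * beurlingDensity (ν ∗ ρ) α := by
        rw [limsup_comp]
        gcongr
        exact limsup_le_limsup_of_le (tendsto_atTop_add_const_right atTop L tendsto_id)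

lemma beurlingDensity_conv_eq_top_iff [SFinite ν] [IsProbabilityMeasure ρ] {α : ℝ} (hα : 0 ≤ α) :
    beurlingDensity (ν ∗ ρ) α = ∞ ↔ beurlingDensity ν α = ∞ := by
  refine ⟨fun h => top_unique (h ▸ beurlingDensity_conv_le ν ρ α), fun h => ?_⟩
  obtain ⟨c, L, hL, hpos⟩ := exists_cube_measure_pos (NeZero.ne ρ)
  have key := mul_beurlingDensity_le_conv ν ρ c hL hα
  rw [h, ENNReal.mul_top hpos.ne', top_le_iff, ENNReal.mul_eq_top] at key
  exact key.elim And.right fun h2 => absurd h2.1 ENNReal.ofReal_ne_top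

end Convolution

lemma beurlingDim_congr {d : ℕ} {μ ν : Measure (Ed d)}
    (h : ∀ α : ℝ, 0 ≤ α → (beurlingDensity μ α = ∞ ↔ beurlingDensity ν α = ∞)) :
    beurlingDim μ = beurlingDim ν :=
  iSup_congr fun α => iSup_congr fun hα => iSup_congr_Prop (h α hα) fun _ => rfl

/-- The Beurling dimension is invariant under convolution with a probability measure:
`dim (ν∗ρ) = dim ν`. -/
theorem stmt11 {d : ℕ} (ν : Measure (Ed d)) [IsLocallyFiniteMeasure ν]
    (ρ : Measure (Ed d)) [IsProbabilityMeasure ρ] :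
    beurlingDim (ν ∗ ρ) = beurlingDim ν :=
  beurlingDim_congr fun _ hα => beurlingDensity_conv_eq_top_iff ν ρ hα
end
end

section
/- Let μ be a Borel probability measure on ℝ^d that is occasionally-α-dimensional, and suppose ν is a Bessel measure for μ. Then D_α(ν) < ∞, and consequently dim ν ≤ α. -/
open MeasureTheory Filter Metric Complex Set
open scoped ENNReal NNReal Real Topology

noncomputable section

/-!
Test the Bessel inequality against `f = 1_S e^{2πi⟨t₀, ·⟩}`: then
`(f dμ)^(t) = ∫_S e^{-2πi⟨t - t₀, x⟩} dμ(x)`, and when `|t - t₀| · diam S ≤ 1/32` the phase moves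
by less than `1/2` on `S`, so `|(f dμ)^(t)| ≥ μ(S)/2`. Integrating over the ball gives
`μ(S) ν(B(t₀, r)) ≤ 4B` whenever `r · diam S ≤ 1/32`. A cube of side `R` lies in a ball of radius
`≈ R`, and since consecutive diameters of the `E_n` have ratio at most `M`, some `E_n` has
`diam E_n ≈ 1/R` up to the factor `M`; then `μ(E_n) ≳ R^{-α}`, so `ν(x + RQ) ≲ R^α`. As `D_γ(ν)`
decreases in `γ`, finiteness of `D_α(ν)` bounds the Beurling dimension by `α`.
-/

lemma norm_cexp_mul_I_sub_cexp_mul_I_le (a b : ℝ) :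
    ‖cexp (a * I) - cexp (b * I)‖ ≤ |a - b| := by
  have hfactor : cexp (a * I) - cexp (b * I) = cexp (b * I) * (cexp (I * (a - b : ℝ)) - 1) := by
    rw [mul_sub, ← Complex.exp_add]; push_cast; ring_nf
  rw [hfactor, norm_mul, norm_exp_ofReal_mul_I, one_mul]
  exact Real.norm_exp_I_mul_ofReal_sub_one_le

lemma sub_mul_measureReal_le_norm_setIntegral {X E : Type*} [MeasurableSpace X]
    [NormedAddCommGroup E] [NormedSpace ℝ E] [CompleteSpace E] {μ : Measure X} {s : Set X}
    (hs : μ s < ∞) {g : X → E} (hg : IntegrableOn g s μ) {c : E} {δ : ℝ}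
    (hδ : ∀ x ∈ s, ‖g x - c‖ ≤ δ) :
    (‖c‖ - δ) * μ.real s ≤ ‖∫ x in s, g x ∂μ‖ := by
  have hsplit : ∫ x in s, g x ∂μ = μ.real s • c + ∫ x in s, (g x - c) ∂μ := by
    rw [integral_sub hg (integrableOn_const hs.ne), setIntegral_const]; abel
  have herr := norm_setIntegral_le_of_norm_le_const hs hδ
  have hmain := norm_sub_norm_le (μ.real s • c) (-∫ x in s, (g x - c) ∂μ)
  rw [norm_neg, sub_neg_eq_add, ← hsplit, norm_smul, Real.norm_of_nonneg measureReal_nonneg]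
    at hmain
  linarith

lemma exists_le_lt_mul_of_tendsto_zero {D : ℕ → ℝ} {M s : ℝ} (hD : Tendsto D atTop (𝓝 0))
    (hM : ∀ n, D n ≤ M * D (n + 1)) (hs : 0 < s) (hs0 : s < D 0) :
    ∃ n, D n ≤ s ∧ s < M * D n := by
  classical
  have hex : ∃ n, D n ≤ s := (hD.eventually (ge_mem_nhds hs)).exists
  obtain ⟨k, hk⟩ : ∃ k, Nat.find hex = k + 1 :=
    Nat.exists_eq_succ_of_ne_zero fun h => (Nat.find_spec hex).not_gt (h ▸ hs0)
  refine ⟨k + 1, hk ▸ Nat.find_spec hex, ?_⟩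
  exact (lt_of_not_ge (Nat.find_min hex (by omega))).trans_le (hM k)

def planeWave {d : ℕ} (t x : Ed d) : ℂ := cexp (-(2 * π * (inner ℝ t x : ℝ)) * I)

section PlaneWave

variable {d : ℕ}

lemma ftm_eq_integral_mul_planeWave (μ : Measure (Ed d)) (f : Ed d → ℂ) (t : Ed d) :
    ftm μ f t = ∫ x, f x * planeWave t x ∂μ := rfl

@[simp]
lemma norm_planeWave (t x : Ed d) : ‖planeWave t x‖ = 1 := by
  simpa [planeWave] using norm_exp_ofReal_mul_I (-(2 * π * inner ℝ t x))

@[simp]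
lemma nnnorm_planeWave (t x : Ed d) : ‖planeWave t x‖₊ = 1 :=
  NNReal.eq (norm_planeWave t x)

lemma planeWave_add (s t x : Ed d) : planeWave (s + t) x = planeWave s x * planeWave t x := by
  simp only [planeWave, inner_add_left, ← Complex.exp_add]
  push_cast
  ring_nf

lemma continuous_planeWave (t : Ed d) : Continuous (planeWave t) := by
  unfold planeWave; fun_prop

lemma norm_planeWave_sub_le (t x y : Ed d) :
    ‖planeWave t y - planeWave t x‖ ≤ 2 * π * (‖t‖ * dist y x) := by
  have h := norm_cexp_mul_I_sub_cexp_mul_I_le (-(2 * π * inner ℝ t y)) (-(2 * π * inner ℝ t x))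
  push_cast at h
  refine h.trans ?_
  rw [neg_sub_neg, ← mul_sub, ← inner_sub_right, abs_mul, abs_of_pos Real.two_pi_pos,
    dist_eq_norm']
  gcongr
  exact abs_real_inner_le_norm t (x - y)

lemma ftm_indicator_planeWave (μ : Measure (Ed d)) {S : Set (Ed d)} (hS : MeasurableSet S)
    (t₀ t : Ed d) :
    ftm μ (S.indicator (planeWave (-t₀))) t = ∫ x in S, planeWave (t - t₀) x ∂μ := by
  rw [ftm_eq_integral_mul_planeWave, ← integral_indicator hS]
  congr 1 with x
  by_cases hx : x ∈ S
  · simp [hx, sub_eq_neg_add, planeWave_add]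
  · simp [hx]

end PlaneWave

section BeurlingDensity

variable {d : ℕ} {ν : Measure (Ed d)}

lemma cube_subset_closedBall (x : Ed d) {R : ℝ} (hR : 0 ≤ R) :
    cube x R ⊆ closedBall x (√d * R) := by
  intro y hy
  have hcoord : ∀ i, dist (y i) (x i) ^ 2 ≤ R ^ 2 := fun i => by
    obtain ⟨hlo, hhi⟩ := hy i
    rw [Real.dist_eq, sq_abs]
    nlinarith
  rw [mem_closedBall, EuclideanSpace.dist_eq]
  calc √(∑ i, dist (y i) (x i) ^ 2) ≤ √(∑ _i : Fin d, R ^ 2) :=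
        Real.sqrt_le_sqrt (Finset.sum_le_sum fun i _ => hcoord i)
    _ = √d * R := by
        rw [Finset.sum_const, Finset.card_univ, Fintype.card_fin, nsmul_eq_mul,
          Real.sqrt_mul (Nat.cast_nonneg d), Real.sqrt_sq hR]

lemma beurlingDensity_le_of_eventually_le {α : ℝ} {C : ℝ≥0∞}
    (h : ∀ᶠ R in atTop, ∀ x, ν (cube x R) ≤ C * ENNReal.ofReal (R ^ α)) :
    beurlingDensity ν α ≤ C :=
  limsup_le_of_le (by isBoundedDefault)
    (h.mono fun _ hR => iSup_le fun x => ENNReal.div_le_of_le_mul (hR x))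

lemma beurlingDensity_anti {α γ : ℝ} (hαγ : α ≤ γ) :
    beurlingDensity ν γ ≤ beurlingDensity ν α := by
  refine limsup_le_limsup ((eventually_ge_atTop 1).mono fun R hR => ?_)
    (by isBoundedDefault) (by isBoundedDefault)
  exact iSup_mono fun x => ENNReal.div_le_div_left
    (ENNReal.ofReal_le_ofReal (Real.rpow_le_rpow_of_exponent_le hR hαγ)) _

lemma beurlingDim_le_of_beurlingDensity_ne_top {α : ℝ} (h : beurlingDensity ν α ≠ ∞) :
    beurlingDim ν ≤ ENNReal.ofReal α := by
  refine iSup₂_le fun β _ => iSup_le fun hβ => ?_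
  by_contra! hlt
  have hαβ : α ≤ β := (ENNReal.ofReal_lt_ofReal_iff'.mp hlt).1.le
  exact h (top_le_iff.mp (hβ ▸ beurlingDensity_anti hαβ))

end BeurlingDensity

section Bessel

variable {d : ℕ} {μ ν : Measure (Ed d)} {S : Set (Ed d)}

lemma measureReal_le_two_mul_norm_ftm_indicator_planeWave [IsFiniteMeasure μ]
    (hS : MeasurableSet S) (hSb : Bornology.IsBounded S) {t₀ t : Ed d} {r : ℝ}
    (hr : r * diam S ≤ 1 / 32) (ht : t ∈ closedBall t₀ r) :
    μ.real S ≤ 2 * ‖ftm μ (S.indicator (planeWave (-t₀))) t‖ := by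
  rcases S.eq_empty_or_nonempty with rfl | ⟨x₀, hx₀⟩
  · simp
  have hclose : ∀ y ∈ S, ‖planeWave (t - t₀) y - planeWave (t - t₀) x₀‖ ≤ 1 / 2 := by
    intro y hy
    have hdist : ‖t - t₀‖ * dist y x₀ ≤ 1 / 32 := by
      rw [← dist_eq_norm]
      exact (mul_le_mul ht (dist_le_diam_of_mem hSb hy hx₀) dist_nonneg
        (dist_nonneg.trans ht)).trans hr
    calc _ ≤ 2 * π * (‖t - t₀‖ * dist y x₀) := norm_planeWave_sub_le _ _ _
      _ ≤ 2 * π * (1 / 32) := by gcongr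
      _ ≤ 1 / 2 := by nlinarith [Real.pi_lt_four]
  have hint : IntegrableOn (planeWave (t - t₀)) S μ :=
    (integrable_const (1 : ℝ)).mono' (continuous_planeWave _).aestronglyMeasurable
      (ae_of_all _ fun x => (norm_planeWave _ x).le)
  have h := sub_mul_measureReal_le_norm_setIntegral (measure_lt_top μ S) hint hclose
  rw [norm_planeWave] at h
  rw [ftm_indicator_planeWave μ hS]
  linarith

lemma memLp_indicator_planeWave [IsFiniteMeasure μ] (hS : MeasurableSet S) (t : Ed d) :
    MemLp (S.indicator (planeWave t)) 2 μ :=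
  MemLp.of_bound ((continuous_planeWave t).aestronglyMeasurable.indicator hS) 1
    (ae_of_all _ fun x => (norm_indicator_le_norm_self _ x).trans (norm_planeWave t x).le)

lemma lintegral_nnnorm_indicator_planeWave_sq (hS : MeasurableSet S) (t : Ed d) :
    ∫⁻ x, (‖S.indicator (planeWave t) x‖₊ : ℝ≥0∞) ^ 2 ∂μ = μ S := by
  rw [← lintegral_indicator_one hS]
  congr 1 with x
  by_cases hx : x ∈ S <;> simp [hx]

lemma IsBesselBound.measure_mul_measure_closedBall_le [IsFiniteMeasure μ] {B : ℝ}
    (hbes : IsBesselBound μ ν B) (hS : MeasurableSet S) (hSb : Bornology.IsBounded S)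
    (t₀ : Ed d) {r : ℝ} (hr : r * diam S ≤ 1 / 32) :
    μ S * ν (closedBall t₀ r) ≤ 4 * ENNReal.ofReal B := by
  set f := S.indicator (planeWave (-t₀))
  have hlow : ∀ t ∈ closedBall t₀ r, μ S ≤ 2 * ‖ftm μ f t‖₊ := fun t ht => by
    calc μ S = ENNReal.ofReal (μ.real S) := (ofReal_measureReal (measure_ne_top μ S)).symm
      _ ≤ ENNReal.ofReal (2 * ‖ftm μ f t‖) := ENNReal.ofReal_le_ofReal
          (measureReal_le_two_mul_norm_ftm_indicator_planeWave hS hSb hr ht)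
      _ = 2 * ‖ftm μ f t‖₊ := by
          rw [ENNReal.ofReal_mul zero_le_two, ofReal_norm, enorm_eq_nnnorm, ENNReal.ofReal_ofNat]
  have hmarkov : μ S ^ 2 * ν (closedBall t₀ r) ≤ 4 * ∫⁻ t, (‖ftm μ f t‖₊ : ℝ≥0∞) ^ 2 ∂ν :=
    calc μ S ^ 2 * ν (closedBall t₀ r) = ∫⁻ _ in closedBall t₀ r, μ S ^ 2 ∂ν :=
          (setLIntegral_const _ _).symm
      _ ≤ ∫⁻ t in closedBall t₀ r, 4 * (‖ftm μ f t‖₊ : ℝ≥0∞) ^ 2 ∂ν :=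
          setLIntegral_mono' measurableSet_closedBall fun t ht => by
            have h := pow_le_pow_left' (hlow t ht) 2
            rwa [mul_pow, show (2 : ℝ≥0∞) ^ 2 = 4 by norm_num] at h
      _ ≤ ∫⁻ t, 4 * (‖ftm μ f t‖₊ : ℝ≥0∞) ^ 2 ∂ν := setLIntegral_le_lintegral _ _
      _ = 4 * ∫⁻ t, (‖ftm μ f t‖₊ : ℝ≥0∞) ^ 2 ∂ν := lintegral_const_mul' _ _ (by norm_num)
  have hbessel := hbes f (memLp_indicator_planeWave hS _)
  rw [lintegral_nnnorm_indicator_planeWave_sq hS] at hbessel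
  rcases eq_or_ne (μ S) 0 with h0 | h0
  · simp [h0]
  rw [← ENNReal.mul_le_mul_iff_right h0 (measure_ne_top μ S)]
  calc μ S * (μ S * ν (closedBall t₀ r)) = μ S ^ 2 * ν (closedBall t₀ r) := by ring
    _ ≤ 4 * (ENNReal.ofReal B * μ S) := hmarkov.trans (by gcongr)
    _ = μ S * (4 * ENNReal.ofReal B) := by ring

lemma IsBesselBound.measure_closedBall_le [IsFiniteMeasure μ] {B : ℝ}
    (hbes : IsBesselBound μ ν B) (hS : MeasurableSet S) (hSb : Bornology.IsBounded S) {m : ℝ}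
    (hm : 0 < m) (hmS : ENNReal.ofReal m ≤ μ S) (t₀ : Ed d) {r : ℝ} (hr : r * diam S ≤ 1 / 32) :
    ν (closedBall t₀ r) ≤ ENNReal.ofReal (4 * B / m) := by
  rw [ENNReal.ofReal_div_of_pos hm, ENNReal.le_div_iff_mul_le (Or.inl (by simpa using hm))
    (Or.inl ENNReal.ofReal_ne_top), mul_comm, ENNReal.ofReal_mul zero_le_four,
    ENNReal.ofReal_ofNat]
  exact (by gcongr : _ ≤ μ S * _).trans (hbes.measure_mul_measure_closedBall_le hS hSb t₀ hr)

lemma IsBesselBound.eventually_measure_cube_le [IsFiniteMeasure μ] {B : ℝ}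
    (hbes : IsBesselBound μ ν B) (hB : 0 ≤ B) {α : ℝ} (hα : 0 ≤ α) {E : ℕ → Set (Ed d)}
    (hEm : ∀ n, MeasurableSet (E n)) (hE0 : 0 < diam (E 0))
    (hlim : Tendsto (fun n => diam (E n)) atTop (𝓝 0)) {M : ℝ}
    (hM : ∀ n, diam (E n) ≤ M * diam (E (n + 1))) {c₁ : ℝ} (hc₁ : 0 < c₁)
    (hlo : ∀ n, ENNReal.ofReal (c₁ * diam (E n) ^ α) ≤ μ (E n)) :
    ∀ᶠ R in atTop, ∀ x, ν (cube x R) ≤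
      ENNReal.ofReal (4 * B / c₁ * (32 * (√d + 1) * M) ^ α) * ENNReal.ofReal (R ^ α) := by
  set K := 32 * (√d + 1) with hK_def
  have hK : 0 < K := by positivity
  filter_upwards [eventually_gt_atTop 0,
    (tendsto_id.const_mul_atTop hK).eventually_gt_atTop (diam (E 0))⁻¹] with R hR hRE x
  have hs : 0 < (K * R)⁻¹ := inv_pos.2 (mul_pos hK hR)
  obtain ⟨n, hns, hsn⟩ := exists_le_lt_mul_of_tendsto_zero hlim hM hs (inv_lt_of_inv_lt₀ hE0 hRE)
  have hM0 : 0 < M := pos_of_mul_pos_left (hs.trans hsn) diam_nonneg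
  have hEn : 0 < diam (E n) := pos_of_mul_pos_right (hs.trans hsn) hM0.le
  have hEb : Bornology.IsBounded (E n) := by
    by_contra h
    exact hEn.ne' (diam_eq_zero_of_unbounded h)
  have hinv : (diam (E n))⁻¹ ≤ K * M * R := by
    rw [inv_le_iff_one_le_mul₀ hEn]
    have := (inv_lt_iff_one_lt_mul₀ (by positivity)).1 hsn
    nlinarith
  calc ν (cube x R) ≤ ν (closedBall x ((√d + 1) * R)) :=
        measure_mono ((cube_subset_closedBall x hR.le).trans
          (closedBall_subset_closedBall (by nlinarith)))
    _ ≤ ENNReal.ofReal (4 * B / (c₁ * diam (E n) ^ α)) :=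
        hbes.measure_closedBall_le (hEm n) hEb (by positivity) (hlo n) x (by
          calc (√d + 1) * R * diam (E n) ≤ (√d + 1) * R * (K * R)⁻¹ := by gcongr
            _ = 1 / 32 := by rw [hK_def]; field_simp)
    _ ≤ ENNReal.ofReal (4 * B / c₁ * (K * M) ^ α * R ^ α) := by
        refine ENNReal.ofReal_le_ofReal ?_
        calc 4 * B / (c₁ * diam (E n) ^ α) = 4 * B / c₁ * (diam (E n))⁻¹ ^ α := by
              rw [Real.inv_rpow hEn.le]; field_simp
          _ ≤ 4 * B / c₁ * (K * M * R) ^ α := by gcongr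
          _ = 4 * B / c₁ * (K * M) ^ α * R ^ α := by
              rw [Real.mul_rpow (by positivity) hR.le]; ring
    _ = _ := ENNReal.ofReal_mul (by positivity)

end Bessel

theorem stmt14_general {d : ℕ} (μ ν : Measure (Ed d)) [IsProbabilityMeasure μ] (α : ℝ) (hα : 0 ≤ α)
    (E : ℕ → Set (Ed d)) (hEm : ∀ n, MeasurableSet (E n))
    (hdec : StrictAnti fun n => Metric.diam (E n))
    (hlim : Tendsto (fun n => Metric.diam (E n)) atTop (nhds 0))
    (M : ℝ) (hM : ∀ n, Metric.diam (E n) ≤ M * Metric.diam (E (n + 1)))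
    (c₁ : ℝ) (hc₁ : 0 < c₁)
    (hlo : ∀ n, ENNReal.ofReal (c₁ * Metric.diam (E n) ^ α) ≤ μ (E n))
    (hbes : ∃ B > (0 : ℝ), IsBesselBound μ ν B) :
    beurlingDensity ν α ≠ ∞ ∧ beurlingDim ν ≤ ENNReal.ofReal α := by
  obtain ⟨B, hB, hbes⟩ := hbes
  have hE0 : 0 < diam (E 0) := diam_nonneg.trans_lt (hdec zero_lt_one)
  have hdens : beurlingDensity ν α ≠ ∞ :=
    ne_top_of_le_ne_top ENNReal.ofReal_ne_top (beurlingDensity_le_of_eventually_le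
      (hbes.eventually_measure_cube_le hB.le hα hEm hE0 hlim hM hc₁ hlo))
  exact ⟨hdens, beurlingDim_le_of_beurlingDensity_ne_top hdens⟩

/-- If `μ` is an occasionally-`α`-dimensional probability measure (there are Borel sets `E_n`
with `diam E_n` strictly decreasing to `0`, bounded ratios, and
`c₁ diam(E_n)^α ≤ μ(E_n) ≤ c₂ diam(E_n)^α`), and `ν` is a Bessel measure for `μ`, then
`D_α(ν) < ∞` and hence `dim ν ≤ α`. -/
theorem stmt14 {d : ℕ} (μ ν : Measure (Ed d)) [IsProbabilityMeasure μ] (α : ℝ) (hα : 0 ≤ α)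
    (E : ℕ → Set (Ed d)) (hEm : ∀ n, MeasurableSet (E n))
    (hdec : StrictAnti fun n => Metric.diam (E n))
    (hlim : Tendsto (fun n => Metric.diam (E n)) atTop (nhds 0))
    (M : ℝ) (hM : ∀ n, Metric.diam (E n) ≤ M * Metric.diam (E (n + 1)))
    (c₁ c₂ : ℝ) (hc₁ : 0 < c₁) (hc₂ : 0 < c₂)
    (hlo : ∀ n, ENNReal.ofReal (c₁ * Metric.diam (E n) ^ α) ≤ μ (E n))
    (hhi : ∀ n, μ (E n) ≤ ENNReal.ofReal (c₂ * Metric.diam (E n) ^ α))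
    (hbes : ∃ B > (0 : ℝ), IsBesselBound μ ν B) :
    beurlingDensity ν α ≠ ∞ ∧ beurlingDim ν ≤ ENNReal.ofReal α :=
  stmt14_general μ ν α hα E hEm hdec hlim M hM c₁ hc₁ hlo hbes
end
end
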